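/- arXiv:2306.16932 — 5 statements merged into one kernel-verified Lean document; each statement's English description precedes it below -/
import Mathlib

section
/- There exists an absolute constant C > 0 such that for all integers q ≥ 1 and all 0 ≤ q₁ ≤ q-1, C(q,q₁)^2 · C(2q-2q₁, q-q₁) ≤ C · 9^q / q, where C(n,k) is the binomial coefficient. -/
open Nat Real Filter Topology

set_option maxHeartbeats 1600000



noncomputable def SL (n : ℕ) : ℝ := Real.sqrt (2*n) * ((n : ℝ) / Real.exp 1)^n

lemma SL_pos {n : ℕ} (hn : 1 ≤ n) : 0 < SL n := by
  have h1 : (0:ℝ) < n := by exact_mod_cast hn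
  exact mul_pos (Real.sqrt_pos.mpr (by linarith)) (pow_pos (by positivity) n)

lemma fact_eq (n : ℕ) (hn : 1 ≤ n) : (n ! : ℝ) = Stirling.stirlingSeq n * SL n := by
  rw [Stirling.stirlingSeq, SL]
  field_simp

lemma sseq_le {n : ℕ} (hn : 1 ≤ n) : Stirling.stirlingSeq n ≤ Real.exp 1 / Real.sqrt 2 := by
  obtain ⟨j, rfl⟩ : ∃ j, n = j + 1 := ⟨n - 1, by omega⟩
  have := Stirling.stirlingSeq'_antitone (Nat.zero_le j)
  simpa [Stirling.stirlingSeq_one] using this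

lemma le_sseq {n : ℕ} (hn : 1 ≤ n) : Real.sqrt π ≤ Stirling.stirlingSeq n := by
  obtain ⟨j, rfl⟩ : ∃ j, n = j + 1 := ⟨n - 1, by omega⟩
  have ht : Tendsto (Stirling.stirlingSeq ∘ Nat.succ) atTop (𝓝 (Real.sqrt π)) := by
    have : (Stirling.stirlingSeq ∘ Nat.succ) = fun n => Stirling.stirlingSeq (n + 1) := rfl
    rw [this, Filter.tendsto_add_atTop_iff_nat 1]
    exact Stirling.tendsto_stirlingSeq_sqrt_pi
  exact Stirling.stirlingSeq'_antitone.le_of_tendsto ht j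

lemma fact_upper {n : ℕ} (hn : 1 ≤ n) : (n ! : ℝ) ≤ (Real.exp 1 / Real.sqrt 2) * SL n := by
  rw [fact_eq n hn]
  exact mul_le_mul_of_nonneg_right (sseq_le hn) (SL_pos hn).le

lemma fact_lower {n : ℕ} (hn : 1 ≤ n) : Real.sqrt π * SL n ≤ (n ! : ℝ) := by
  rw [fact_eq n hn]
  exact mul_le_mul_of_nonneg_right (le_sseq hn) (SL_pos hn).le




lemma choose_le {m k : ℕ} (hm : 1 ≤ m) (hk : 1 ≤ k) :
    ((m+k).choose k : ℝ) * (Real.sqrt π * SL m) * (Real.sqrt π * SL k)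
      ≤ (Real.exp 1 / Real.sqrt 2) * SL (m+k) := by
  have h1 : (((m+k).choose k) : ℝ) = ((m+k)! : ℝ) / ((k ! : ℝ) * (m ! : ℝ)) := by
    rw [Nat.cast_choose ℝ (Nat.le_add_left k m), Nat.add_sub_cancel]
  have hkpos : (0:ℝ) < (k ! : ℝ) := by exact_mod_cast Nat.factorial_pos k
  have hmpos : (0:ℝ) < (m ! : ℝ) := by exact_mod_cast Nat.factorial_pos m
  calc ((m+k).choose k : ℝ) * (Real.sqrt π * SL m) * (Real.sqrt π * SL k)
      ≤ ((m+k).choose k : ℝ) * (m ! : ℝ) * (k ! : ℝ) := by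
        have n1 : (0:ℝ) ≤ Real.sqrt π * SL m := mul_nonneg (Real.sqrt_nonneg _) (SL_pos hm).le
        have n2 : (0:ℝ) ≤ Real.sqrt π * SL k := mul_nonneg (Real.sqrt_nonneg _) (SL_pos hk).le
        exact mul_le_mul (mul_le_mul le_rfl (fact_lower hm) n1 (Nat.cast_nonneg _))
          (fact_lower hk) n2 (by positivity)
    _ = ((m+k)! : ℝ) := by rw [h1]; field_simp
    _ ≤ (Real.exp 1 / Real.sqrt 2) * SL (m+k) := fact_upper (by omega)


lemma G_bound {m k : ℕ} (hm : 1 ≤ m) (hk : 1 ≤ k) {lam mu : ℝ} (hl : 0 < lam) (hmu : 0 < mu) :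
    lam^(2*m) * mu^(2*k) * ((((m:ℝ))+(k:ℝ))^(2*(m+k)) * 2^(2*m))
      ≤ (2*lam+mu)^(2*(m+k)) * ((m:ℝ)^(2*m) * (k:ℝ)^(2*k)) := by
  have hMr : (0:ℝ) < (m:ℝ) := by exact_mod_cast hm
  have hKr : (0:ℝ) < (k:ℝ) := by exact_mod_cast hk
  set Mr := (m:ℝ); set Kr := (k:ℝ)
  have hq : (0:ℝ) < Mr + Kr := by linarith
  set p₁ := lam*(2*(Mr+Kr))/(3*Mr) with hp₁
  set p₂ := mu*(Mr+Kr)/(3*Kr) with hp₂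
  have hp₁0 : 0 ≤ p₁ := by positivity
  have hp₂0 : 0 ≤ p₂ := by positivity
  have h := Real.geom_mean_le_arith_mean2_weighted
    (le_of_lt (div_pos hMr hq)) (le_of_lt (div_pos hKr hq)) hp₁0 hp₂0
    (by field_simp)
  have hs : (Mr/(Mr+Kr))*p₁ + (Kr/(Mr+Kr))*p₂ = (2*lam+mu)/3 := by
    rw [hp₁, hp₂]; field_simp
  rw [hs] at h
  -- raise to power 2*(m+k)
  have hN := pow_le_pow_left₀ (by positivity) h (2*(m+k))
  have hL : (p₁ ^ (Mr/(Mr+Kr)) * p₂ ^ (Kr/(Mr+Kr)))^(2*(m+k)) = p₁^(2*m) * p₂^(2*k) := by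
    rw [mul_pow, ← Real.rpow_natCast (p₁ ^ (Mr/(Mr+Kr))), ← Real.rpow_natCast (p₂ ^ (Kr/(Mr+Kr))),
      ← Real.rpow_mul hp₁0, ← Real.rpow_mul hp₂0]
    have e1 : (Mr/(Mr+Kr)) * ((2*(m+k) : ℕ) : ℝ) = ((2*m : ℕ) : ℝ) := by
      push_cast; field_simp; ring
    have e2 : (Kr/(Mr+Kr)) * ((2*(m+k) : ℕ) : ℝ) = ((2*k : ℕ) : ℝ) := by
      push_cast; field_simp; ring
    rw [e1, e2, Real.rpow_natCast, Real.rpow_natCast]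
  rw [hL] at hN
  -- multiply by D
  have h3 := mul_le_mul_of_nonneg_right hN
    (by positivity : (0:ℝ) ≤ (3*Mr)^(2*m) * (3*Kr)^(2*k))
  calc lam^(2*m) * mu^(2*k) * ((Mr+Kr)^(2*(m+k)) * 2^(2*m))
      = p₁^(2*m) * p₂^(2*k) * ((3*Mr)^(2*m) * (3*Kr)^(2*k)) := by
        have b1 : p₁^(2*m) = lam^(2*m)*(2^(2*m)*(Mr+Kr)^(2*m))/(3*Mr)^(2*m) := by
          rw [hp₁, div_pow, mul_pow, mul_pow]
        have b2 : p₂^(2*k) = mu^(2*k)*(Mr+Kr)^(2*k)/(3*Kr)^(2*k) := by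
          rw [hp₂, div_pow, mul_pow]
        rw [b1, b2]; field_simp; ring
    _ ≤ ((2*lam+mu)/3)^(2*(m+k)) * ((3*Mr)^(2*m) * (3*Kr)^(2*k)) := h3
    _ = (2*lam+mu)^(2*(m+k)) * (Mr^(2*m) * Kr^(2*k)) := by
        rw [div_pow, mul_pow 3 Mr, mul_pow 3 Kr]; field_simp; ring




lemma X3 {m k : ℕ} (hm : 1 ≤ m) (hk : 1 ≤ k) :
    (SL (m+k))^2 * SL (2*m) * (2*(m:ℝ)*(k:ℝ)*((m:ℝ)^(2*m)*(k:ℝ)^(2*k)))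
      ≤ ((m:ℝ)+(k:ℝ)) * ((((m:ℝ)+(k:ℝ))^(2*(m+k))) * 2^(2*m)) * ((SL m)^4 * (SL k)^2) := by
  have hM : (1:ℝ) ≤ (m:ℝ) := by exact_mod_cast hm
  have hK : (1:ℝ) ≤ (k:ℝ) := by exact_mod_cast hk
  unfold SL
  push_cast
  have ha : (Real.sqrt (2*((m:ℝ)+(k:ℝ))))^2 = 2*((m:ℝ)+(k:ℝ)) := Real.sq_sqrt (by positivity)
  have hb : (Real.sqrt (2*(m:ℝ)))^4 = (2*(m:ℝ))^2 := by
    rw [show 4 = 2*2 from rfl, pow_mul, Real.sq_sqrt (by positivity : (0:ℝ) ≤ 2*(m:ℝ))]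
  have hc : (Real.sqrt (2*(k:ℝ)))^2 = 2*(k:ℝ) := Real.sq_sqrt (by positivity)
  have hd : Real.sqrt (2*(2*(m:ℝ))) ≤ 2*(m:ℝ) := by
    have h1 : 2*(2*(m:ℝ)) ≤ (2*(m:ℝ))^2 := by nlinarith
    calc Real.sqrt (2*(2*(m:ℝ))) ≤ Real.sqrt ((2*(m:ℝ))^2) := Real.sqrt_le_sqrt h1
      _ = 2*(m:ℝ) := Real.sqrt_sq (by positivity)
  calc (Real.sqrt (2*((m:ℝ)+(k:ℝ))) * (((m:ℝ)+(k:ℝ))/Real.exp 1)^(m+k))^2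
        * (Real.sqrt (2*(2*(m:ℝ))) * ((2*(m:ℝ))/Real.exp 1)^(2*m))
        * (2*(m:ℝ)*(k:ℝ)*((m:ℝ)^(2*m)*(k:ℝ)^(2*k)))
      = Real.sqrt (2*(2*(m:ℝ))) *
          ((Real.sqrt (2*((m:ℝ)+(k:ℝ))))^2 * ((((m:ℝ)+(k:ℝ))/Real.exp 1)^(m+k))^2
            * ((2*(m:ℝ))/Real.exp 1)^(2*m) * (2*(m:ℝ)*(k:ℝ)*((m:ℝ)^(2*m)*(k:ℝ)^(2*k)))) := by
        ring
    _ ≤ (2*(m:ℝ)) *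
          ((Real.sqrt (2*((m:ℝ)+(k:ℝ))))^2 * ((((m:ℝ)+(k:ℝ))/Real.exp 1)^(m+k))^2
            * ((2*(m:ℝ))/Real.exp 1)^(2*m) * (2*(m:ℝ)*(k:ℝ)*((m:ℝ)^(2*m)*(k:ℝ)^(2*k)))) := by
        apply mul_le_mul_of_nonneg_right hd
        positivity
    _ = ((m:ℝ)+(k:ℝ)) * ((((m:ℝ)+(k:ℝ))^(2*(m+k))) * 2^(2*m))
          * ((Real.sqrt (2*(m:ℝ)) * ((m:ℝ)/Real.exp 1)^m)^4
            * (Real.sqrt (2*(k:ℝ)) * ((k:ℝ)/Real.exp 1)^k)^2) := by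
        rw [mul_pow (Real.sqrt (2*(m:ℝ))), mul_pow (Real.sqrt (2*(k:ℝ))), ha, hb, hc]
        have he : Real.exp 1 ≠ 0 := (Real.exp_pos 1).ne'
        field_simp
        norm_num
        ring_nf
        simp only [← add_mul, mul_pow]
        ring




lemma master {m k : ℕ} (hm : 1 ≤ m) (hk : 1 ≤ k) {lam mu : ℝ} (hl : 0 < lam) (hmu : 0 < mu) :
    (((m+k).choose k : ℝ)^2 * ((2*m).choose m : ℝ))
        * ((Real.sqrt π)^6 * (2*(m:ℝ)*(k:ℝ)*(lam^(2*m)*mu^(2*k))))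
      ≤ (Real.exp 1 / Real.sqrt 2)^3 * ((m:ℝ)+(k:ℝ)) * (2*lam+mu)^(2*(m+k)) := by
  have hA : (0:ℝ) < Real.sqrt π := Real.sqrt_pos.mpr Real.pi_pos
  have hB : (0:ℝ) < Real.exp 1 / Real.sqrt 2 := by positivity
  have hM : (0:ℝ) < (m:ℝ) := by exact_mod_cast hm
  have hK : (0:ℝ) < (k:ℝ) := by exact_mod_cast hk
  have hPm : 0 < SL m := SL_pos hm
  have hPk : 0 < SL k := SL_pos hk
  have hPq : 0 < SL (m+k) := SL_pos (by omega)
  have c1 := choose_le hm hk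
  have c2 : ((2*m).choose m : ℝ) * (Real.sqrt π * SL m) * (Real.sqrt π * SL m)
      ≤ (Real.exp 1 / Real.sqrt 2) * SL (2*m) := by
    have := choose_le hm hm
    rwa [show m + m = 2*m from by omega] at this
  have g := G_bound hm hk hl hmu
  have x3 := X3 hm hk
  have hW : (0:ℝ) < (m:ℝ)^(2*m)*(k:ℝ)^(2*k) * ((SL m)^4 * (SL k)^2) := by positivity
  apply le_of_mul_le_mul_right _ hW
  have n1 : (0:ℝ) ≤ ((m+k).choose k : ℝ) * (Real.sqrt π * SL m) * (Real.sqrt π * SL k) := by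
    positivity
  calc (((m+k).choose k : ℝ)^2 * ((2*m).choose m : ℝ))
          * ((Real.sqrt π)^6 * (2*(m:ℝ)*(k:ℝ)*(lam^(2*m)*mu^(2*k))))
          * ((m:ℝ)^(2*m)*(k:ℝ)^(2*k) * ((SL m)^4 * (SL k)^2))
      = ((((m+k).choose k : ℝ) * (Real.sqrt π * SL m) * (Real.sqrt π * SL k))^2
          * (((2*m).choose m : ℝ) * (Real.sqrt π * SL m) * (Real.sqrt π * SL m)))
          * (2*(m:ℝ)*(k:ℝ)*((m:ℝ)^(2*m)*(k:ℝ)^(2*k)) * (lam^(2*m)*mu^(2*k))) := by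
        ring
    _ ≤ (((Real.exp 1 / Real.sqrt 2) * SL (m+k))^2
          * ((Real.exp 1 / Real.sqrt 2) * SL (2*m)))
          * (2*(m:ℝ)*(k:ℝ)*((m:ℝ)^(2*m)*(k:ℝ)^(2*k)) * (lam^(2*m)*mu^(2*k))) := by
        apply mul_le_mul_of_nonneg_right _ (by positivity)
        apply mul_le_mul (pow_le_pow_left₀ n1 c1 2) c2 (by positivity) (by positivity)
    _ = ((Real.exp 1 / Real.sqrt 2)^3
          * ((SL (m+k))^2 * SL (2*m) * (2*(m:ℝ)*(k:ℝ)*((m:ℝ)^(2*m)*(k:ℝ)^(2*k)))))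
          * (lam^(2*m)*mu^(2*k)) := by ring
    _ ≤ ((Real.exp 1 / Real.sqrt 2)^3
          * (((m:ℝ)+(k:ℝ)) * ((((m:ℝ)+(k:ℝ))^(2*(m+k))) * 2^(2*m)) * ((SL m)^4 * (SL k)^2)))
          * (lam^(2*m)*mu^(2*k)) := by
        apply mul_le_mul_of_nonneg_right (mul_le_mul_of_nonneg_left x3 (by positivity))
          (by positivity)
    _ = ((Real.exp 1 / Real.sqrt 2)^3 * ((m:ℝ)+(k:ℝ)))
          * (lam^(2*m) * mu^(2*k) * ((((m:ℝ))+(k:ℝ))^(2*(m+k)) * 2^(2*m)))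
          * ((SL m)^4 * (SL k)^2) := by ring
    _ ≤ ((Real.exp 1 / Real.sqrt 2)^3 * ((m:ℝ)+(k:ℝ)))
          * ((2*lam+mu)^(2*(m+k)) * ((m:ℝ)^(2*m) * (k:ℝ)^(2*k)))
          * ((SL m)^4 * (SL k)^2) := by
        apply mul_le_mul_of_nonneg_right (mul_le_mul_of_nonneg_left g (by positivity))
          (by positivity)
    _ = (Real.exp 1 / Real.sqrt 2)^3 * ((m:ℝ)+(k:ℝ)) * (2*lam+mu)^(2*(m+k))
          * ((m:ℝ)^(2*m)*(k:ℝ)^(2*k) * ((SL m)^4 * (SL k)^2)) := by ring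

set_option maxHeartbeats 1600000



lemma exists_bound {r : ℝ} (h0 : 0 ≤ r) (h1 : r < 1) :
    ∃ D : ℝ, 0 ≤ D ∧ ∀ n : ℕ, (n:ℝ)^2 * r^n ≤ D := by
  obtain ⟨D, hD⟩ := (tendsto_pow_const_mul_const_pow_of_lt_one 2 h0 h1).bddAbove_range
  exact ⟨max D 0, le_max_right _ _,
    fun n => le_trans (hD (Set.mem_range_self n)) (le_max_left _ _)⟩

/-- There is an absolute constant `C > 0` such that for all `q ≥ 1` and `0 ≤ q₁ ≤ q - 1`,
`C(q,q₁)^2 * C(2q-2q₁, q-q₁) ≤ C * 9^q / q`. -/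
theorem choose_sq_mul_central_le :
    ∃ C : ℝ, 0 < C ∧ ∀ q q₁ : ℕ, 1 ≤ q → q₁ ≤ q - 1 →
      ((q.choose q₁) ^ 2 * ((2 * q - 2 * q₁).choose (q - q₁)) : ℝ) ≤ C * 9 ^ q / q := by
  have hA : (0:ℝ) < Real.sqrt π := Real.sqrt_pos.mpr Real.pi_pos
  have hB : (0:ℝ) < Real.exp 1 / Real.sqrt 2 := by positivity
  set A : ℝ := (Real.sqrt π)^6 with hAdef
  set B : ℝ := (Real.exp 1 / Real.sqrt 2)^3 with hBdef
  have hA6 : 0 < A := by positivity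
  have hB3 : 0 < B := by positivity
  obtain ⟨D₀, hD₀0, hD₀⟩ := exists_bound (by norm_num : (0:ℝ) ≤ 4/9) (by norm_num)
  obtain ⟨DB, hDB0, hDB⟩ := exists_bound (by norm_num : (0:ℝ) ≤ 8/9) (by norm_num)
  obtain ⟨DC, hDC0, hDC⟩ := exists_bound (by norm_num : (0:ℝ) ≤ 121/128) (by norm_num)
  have haux1 : (0:ℝ) ≤ (B/A)*DB := by positivity
  have haux2 : (0:ℝ) ≤ (B/A)*DC := by positivity
  have haux3 : (0:ℝ) ≤ 8*B/A := by positivity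
  refine ⟨8*B/A + (B/A)*DB + (B/A)*DC + D₀ + 1, by positivity, ?_⟩
  set C : ℝ := 8*B/A + (B/A)*DB + (B/A)*DC + D₀ + 1 with hCdef
  intro q k hq hq₁
  obtain ⟨m, hm1, rfl⟩ : ∃ m, 1 ≤ m ∧ q = m + k := ⟨q - k, by omega, by omega⟩
  rw [show 2*(m+k) - 2*k = 2*m from by omega, show m+k-k = m from by omega]
  have hqpos : (0:ℝ) < ((m+k : ℕ) : ℝ) := by exact_mod_cast Nat.lt_of_lt_of_le Nat.zero_lt_one (by omega)
  rw [le_div_iff₀ hqpos]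
  have h9 : (0:ℝ) < (9:ℝ)^(m+k) := by positivity
  have hMr : (1:ℝ) ≤ (m:ℝ) := by exact_mod_cast hm1
  push_cast
  set T : ℝ := (((m+k).choose k : ℝ))^2 * ((2*m).choose m : ℝ) with hTdef
  have hT0 : 0 ≤ T := by positivity
  set Q : ℝ := (m:ℝ) + (k:ℝ) with hQdef
  have hQ0 : (0:ℝ) < Q := by rw [hQdef]; push_cast at hqpos ⊢; linarith
  -- goal should now be T * Q ≤ C * 9^(m+k)
  show T * Q ≤ C * 9^(m+k)
  rcases Nat.eq_zero_or_pos k with rfl | hk1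
  · -- k = 0 : bound by 4^m * m
    have hch : ((2*m).choose m : ℝ) ≤ 4^m := by
      have h1 : (2*m).choose m ≤ (2*m+1).choose m := Nat.choose_le_choose m (by omega)
      have h2 := Nat.choose_middle_le_pow m
      exact_mod_cast h1.trans h2
    have hT4 : T ≤ 4^m := by
      rw [hTdef]; simp only [Nat.choose_zero_right, Nat.cast_one, one_pow, one_mul]; exact hch
    have hQm : Q = (m:ℝ) := by rw [hQdef]; push_cast; ring
    have key : T * Q ≤ D₀ * 9^(m+0) := by
      rw [hQm]
      calc T * (m:ℝ) ≤ 4^m * (m:ℝ) := mul_le_mul_of_nonneg_right hT4 (by positivity)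
        _ ≤ ((m:ℝ)^2 * (4/9)^m) * 9^m := by
            have e : ((4:ℝ)/9)^m * 9^m = 4^m := by rw [← mul_pow]; norm_num
            rw [mul_assoc, e]
            nlinarith [mul_nonneg (mul_nonneg (sub_nonneg.mpr hMr)
              (by positivity : (0:ℝ) ≤ (m:ℝ)))
              (pow_pos (show (0:ℝ) < 4 from by norm_num) m).le]
        _ ≤ D₀ * 9^m := mul_le_mul_of_nonneg_right (hD₀ m) (by positivity)
        _ = D₀ * 9^(m+0) := by norm_num
    refine key.trans (mul_le_mul_of_nonneg_right ?_ h9.le)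
    rw [hCdef]; linarith
  · -- k ≥ 1
    have hKr : (1:ℝ) ≤ (k:ℝ) := by exact_mod_cast hk1
    have hmk : (1:ℝ) ≤ (m:ℝ)*(k:ℝ) := by nlinarith
    by_cases hc2m : m + k ≤ 2*m
    · by_cases hc8k : m + k ≤ 8*k
      · -- Case A
        have hmas := master hm1 hk1 (lam := 1) (mu := 1) one_pos one_pos
        rw [← hAdef, ← hBdef] at hmas
        simp only [one_pow, mul_one] at hmas
        rw [show ((2:ℝ)+1)^(2*(m+k)) = 9^(m+k) from by rw [pow_mul]; norm_num] at hmas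
        have hcc1 : Q ≤ 2*(m:ℝ) := by rw [hQdef]; exact_mod_cast hc2m
        have hcc2 : Q ≤ 8*(k:ℝ) := by rw [hQdef]; exact_mod_cast hc8k
        have hq2 : Q * Q ≤ 16*((m:ℝ)*(k:ℝ)) := by nlinarith
        have chain : (T*Q)*(A*Q) ≤ ((8*B*9^(m+k)))*Q := by
          calc (T*Q)*(A*Q) = T*(A*(Q*Q)) := by ring
            _ ≤ T*(A*(16*((m:ℝ)*(k:ℝ)))) := by
                apply mul_le_mul_of_nonneg_left (mul_le_mul_of_nonneg_left hq2 hA6.le) hT0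
            _ = (T*(A*(2*(m:ℝ)*(k:ℝ))))*8 := by ring
            _ ≤ (B*Q*9^(m+k))*8 := mul_le_mul_of_nonneg_right hmas (by norm_num)
            _ = ((8*B*9^(m+k)))*Q := by ring
        have step : T*Q ≤ (8*B/A)*9^(m+k) := by
          rw [show (8*B/A)*9^(m+k) = (8*B*9^(m+k))/A from by ring, le_div_iff₀ hA6]
          refine le_of_mul_le_mul_right ?_ hQ0
          calc (T*Q*A)*Q = (T*Q)*(A*Q) := by ring
            _ ≤ ((8*B*9^(m+k)))*Q := chain
        refine step.trans (mul_le_mul_of_nonneg_right ?_ h9.le)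
        rw [hCdef]; linarith
      · -- Case C : 8k < m+k
        have hmas := master hm1 hk1 (lam := 1) (mu := (1:ℝ)/16) one_pos (by norm_num)
        rw [← hAdef, ← hBdef] at hmas
        simp only [one_pow, one_mul, mul_one] at hmas
        rw [show ((2:ℝ)+1/16) = 33/16 from by norm_num] at hmas
        -- (1/16)^(2k) = (1/2)^(8k)
        have h16 : ((1:ℝ)/16)^(2*k) = (1/2)^(8*k) := by
          rw [show (1:ℝ)/16 = (1/2)^4 from by norm_num, ← pow_mul, show 4*(2*k) = 8*k from by ring]
        have hpow : ((1:ℝ)/2)^(m+k) ≤ ((1:ℝ)/16)^(2*k) := by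
          rw [h16]
          exact pow_le_pow_of_le_one (by norm_num) (by norm_num) (by omega)
        have hlhs : T*(A*((1:ℝ)/2)^(m+k)) ≤ T*(A*(2*(m:ℝ)*(k:ℝ)*((1:ℝ)/16)^(2*k))) := by
          apply mul_le_mul_of_nonneg_left _ hT0
          apply mul_le_mul_of_nonneg_left _ hA6.le
          have h160 : (0:ℝ) ≤ ((1:ℝ)/16)^(2*k) := by positivity
          nlinarith
        have key1 : T*(A*((1:ℝ)/2)^(m+k)) ≤ B*Q*(33/16)^(2*(m+k)) := hlhs.trans hmas
        -- multiply by 2^(m+k)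
        have h2N : (0:ℝ) < (2:ℝ)^(m+k) := by positivity
        have hTA : T*A ≤ B*Q*((1089:ℝ)/128)^(m+k) := by
          have hmul := mul_le_mul_of_nonneg_right key1 h2N.le
          have ha1 : ((1:ℝ)/2)^(m+k)*(2:ℝ)^(m+k) = 1 := by rw [← mul_pow]; norm_num
          have e1 : T*(A*((1:ℝ)/2)^(m+k))*(2:ℝ)^(m+k) = T*A := by
            calc T*(A*((1:ℝ)/2)^(m+k))*(2:ℝ)^(m+k)
                = T*A*(((1:ℝ)/2)^(m+k)*(2:ℝ)^(m+k)) := by ring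
              _ = T*A := by rw [ha1, mul_one]
          have ha2 : ((33:ℝ)/16)^(2*(m+k)) = ((1089:ℝ)/256)^(m+k) := by
            rw [pow_mul]; norm_num
          have ha3 : ((1089:ℝ)/256)^(m+k)*(2:ℝ)^(m+k) = ((1089:ℝ)/128)^(m+k) := by
            rw [← mul_pow]; norm_num
          have e2 : B*Q*((33:ℝ)/16)^(2*(m+k))*(2:ℝ)^(m+k) = B*Q*((1089:ℝ)/128)^(m+k) := by
            calc B*Q*((33:ℝ)/16)^(2*(m+k))*(2:ℝ)^(m+k)
                = B*Q*(((1089:ℝ)/256)^(m+k)*(2:ℝ)^(m+k)) := by rw [ha2]; ring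
              _ = B*Q*((1089:ℝ)/128)^(m+k) := by rw [ha3]
          rw [e1, e2] at hmul; exact hmul
        have hQN : Q = ((m+k : ℕ):ℝ) := by rw [hQdef]; push_cast; ring
        have key2 : T*Q*A ≤ B*(DC*9^(m+k)) := by
          have hmul := mul_le_mul_of_nonneg_right hTA hQ0.le
          have e3 : T*A*Q = T*Q*A := by ring
          rw [e3] at hmul
          refine hmul.trans ?_
          have e4 : B*Q*((1089:ℝ)/128)^(m+k)*Q = B*(Q^2*((121:ℝ)/128)^(m+k)*9^(m+k)) := by
            rw [show ((1089:ℝ)/128)^(m+k) = ((121:ℝ)/128)^(m+k)*9^(m+k) from by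
              rw [← mul_pow]; norm_num]
            ring
          rw [e4]
          apply mul_le_mul_of_nonneg_left _ hB3.le
          apply mul_le_mul_of_nonneg_right _ h9.le
          rw [hQN]
          exact hDC (m+k)
        have step : T*Q ≤ (B/A)*DC*9^(m+k) := by
          rw [show (B/A)*DC*9^(m+k) = (B*(DC*9^(m+k)))/A from by ring, le_div_iff₀ hA6]
          exact key2
        refine step.trans (mul_le_mul_of_nonneg_right ?_ h9.le)
        rw [hCdef]; linarith
    · -- Case B : 2m < m+k
      have hmas := master hm1 hk1 (lam := (1:ℝ)/2) (mu := 1) (by norm_num) one_pos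
      rw [← hAdef, ← hBdef] at hmas
      simp only [one_pow, one_mul, mul_one] at hmas
      rw [show ((2:ℝ)*(1/2)+1) = 2 from by norm_num] at hmas
      have hpow : ((1:ℝ)/2)^(m+k) ≤ ((1:ℝ)/2)^(2*m) :=
        pow_le_pow_of_le_one (by norm_num) (by norm_num) (by omega)
      have hlhs : T*(A*((1:ℝ)/2)^(m+k)) ≤ T*(A*(2*(m:ℝ)*(k:ℝ)*((1:ℝ)/2)^(2*m))) := by
        apply mul_le_mul_of_nonneg_left _ hT0
        apply mul_le_mul_of_nonneg_left _ hA6.le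
        have h20 : (0:ℝ) ≤ ((1:ℝ)/2)^(2*m) := by positivity
        nlinarith
      have key1 : T*(A*((1:ℝ)/2)^(m+k)) ≤ B*Q*(2:ℝ)^(2*(m+k)) := hlhs.trans hmas
      have h2N : (0:ℝ) < (2:ℝ)^(m+k) := by positivity
      have hTA : T*A ≤ B*Q*((8:ℝ))^(m+k) := by
        have hmul := mul_le_mul_of_nonneg_right key1 h2N.le
        have ha1 : ((1:ℝ)/2)^(m+k)*(2:ℝ)^(m+k) = 1 := by rw [← mul_pow]; norm_num
        have e1 : T*(A*((1:ℝ)/2)^(m+k))*(2:ℝ)^(m+k) = T*A := by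
          calc T*(A*((1:ℝ)/2)^(m+k))*(2:ℝ)^(m+k)
              = T*A*(((1:ℝ)/2)^(m+k)*(2:ℝ)^(m+k)) := by ring
            _ = T*A := by rw [ha1, mul_one]
        have ha2 : ((2:ℝ))^(2*(m+k)) = ((4:ℝ))^(m+k) := by rw [pow_mul]; norm_num
        have ha3 : ((4:ℝ))^(m+k)*(2:ℝ)^(m+k) = ((8:ℝ))^(m+k) := by rw [← mul_pow]; norm_num
        have e2 : B*Q*(2:ℝ)^(2*(m+k))*(2:ℝ)^(m+k) = B*Q*((8:ℝ))^(m+k) := by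
          calc B*Q*(2:ℝ)^(2*(m+k))*(2:ℝ)^(m+k)
              = B*Q*(((4:ℝ))^(m+k)*(2:ℝ)^(m+k)) := by rw [ha2]; ring
            _ = B*Q*((8:ℝ))^(m+k) := by rw [ha3]
        rw [e1, e2] at hmul; exact hmul
      have hQN : Q = ((m+k : ℕ):ℝ) := by rw [hQdef]; push_cast; ring
      have key2 : T*Q*A ≤ B*(DB*9^(m+k)) := by
        have hmul := mul_le_mul_of_nonneg_right hTA hQ0.le
        have e3 : T*A*Q = T*Q*A := by ring
        rw [e3] at hmul
        refine hmul.trans ?_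
        have e4 : B*Q*((8:ℝ))^(m+k)*Q = B*(Q^2*((8:ℝ)/9)^(m+k)*9^(m+k)) := by
          rw [show ((8:ℝ))^(m+k) = ((8:ℝ)/9)^(m+k)*9^(m+k) from by rw [← mul_pow]; norm_num]
          ring
        rw [e4]
        apply mul_le_mul_of_nonneg_left _ hB3.le
        apply mul_le_mul_of_nonneg_right _ h9.le
        rw [hQN]
        exact hDB (m+k)
      have step : T*Q ≤ (B/A)*DB*9^(m+k) := by
        rw [show (B/A)*DB*9^(m+k) = (B*(DB*9^(m+k)))/A from by ring, le_div_iff₀ hA6]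
        exact key2
      refine step.trans (mul_le_mul_of_nonneg_right ?_ h9.le)
      rw [hCdef]; linarith
end

section
/- As q → ∞ through even integers, ((q-3)!!)² / (π · q!) ∼ √2 / (√(π³) · q^{5/2}); that is, the squared Hermite coefficients of the ReLu activation satisfy J_q² ∼ √2/(√(π³) q^{5/2}). -/
open Real Nat Filter

private lemma stirlingPos {n : ℕ} (hn : n ≠ 0) : 0 < Stirling.stirlingSeq n := by
  obtain ⟨k, rfl⟩ := Nat.exists_eq_succ_of_ne_zero hn
  exact Stirling.stirlingSeq'_pos k

private lemma factorial_stirling {n : ℕ} (hn : n ≠ 0) :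
    (n ! : ℝ) = Stirling.stirlingSeq n * (Real.sqrt (2 * n) * ((n : ℝ) / Real.exp 1) ^ n) := by
  have h0 : (0:ℝ) < n := by exact_mod_cast Nat.pos_of_ne_zero hn
  rw [Stirling.stirlingSeq, div_mul_cancel₀]
  positivity

private lemma c_eq (m : ℕ) (hm : m ≠ 0) :
    ((2*m)! : ℝ) / ((4:ℝ)^m * ((m)! : ℝ)^2)
      = Stirling.stirlingSeq (2*m) / (Stirling.stirlingSeq m ^ 2 * Real.sqrt m) := by
  have hx : (0:ℝ) < (m:ℝ) := by exact_mod_cast Nat.pos_of_ne_zero hm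
  have ha := factorial_stirling (n := 2*m) (by omega)
  have hb := factorial_stirling hm
  have h4x : Real.sqrt (2 * ((2*m : ℕ):ℝ)) = 2 * Real.sqrt m := by
    push_cast
    rw [show (2:ℝ)*(2*(m:ℝ)) = 2^2*(m:ℝ) by ring, Real.sqrt_mul (by norm_num),
      Real.sqrt_sq (by norm_num)]
  have hpow : (((2*m:ℕ):ℝ) / Real.exp 1) ^ (2*m)
      = ((2:ℝ)^m)^2 * (((m:ℝ) / Real.exp 1) ^ m)^2 := by
    push_cast
    rw [show 2*m = m*2 by ring, pow_mul]
    ring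
  rw [h4x, hpow] at ha
  have h2x : Real.sqrt (2 * ((m:ℕ):ℝ)) = Real.sqrt 2 * Real.sqrt m := by
    rw [Real.sqrt_mul (by norm_num)]
  rw [h2x] at hb
  rw [ha, hb]
  have h4P : (4:ℝ)^m = ((2:ℝ)^m)^2 := by
    rw [← pow_mul, show m*2 = 2*m by ring, pow_mul]; norm_num
  rw [h4P, mul_pow, mul_pow, mul_pow, Real.sq_sqrt (by norm_num : (0:ℝ) ≤ 2)]
  have hb0 : Stirling.stirlingSeq m ≠ 0 := (stirlingPos hm).ne'
  have hu0 : Real.sqrt (m:ℝ) ≠ 0 := by positivity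
  have hP0 : ((2:ℝ)^m) ≠ 0 := by positivity
  have hW0 : (((m:ℝ) / Real.exp 1) ^ m) ≠ 0 := by positivity
  have husq : Real.sqrt (m:ℝ) * Real.sqrt (m:ℝ) = (m:ℝ) := Real.mul_self_sqrt hx.le
  field_simp

private lemma key (m : ℕ) (hm : m ≠ 0) :
    ((((2 * (m+2) - 3)‼ : ℝ) ^ 2 / (π * ((2 * (m+2))! : ℝ))) /
        (Real.sqrt 2 / (Real.sqrt (π ^ 3) * ((2 * (m+2) : ℕ) : ℝ) ^ ((5 : ℝ) / 2))))
      = (Stirling.stirlingSeq (2*m) * Real.sqrt π / Stirling.stirlingSeq m ^ 2)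
        * ((2*(m:ℝ)*(2*(m:ℝ)+1)) / ((2*(m:ℝ)+2)*(2*(m:ℝ)+3)))
        * (((m:ℝ)+2) * Real.sqrt ((m:ℝ)+2) / ((m:ℝ) * Real.sqrt (m:ℝ))) := by
  have hx : (0:ℝ) < (m:ℝ) := by exact_mod_cast Nat.pos_of_ne_zero hm
  have hidx : 2 * (m+2) - 3 = 2*m+1 := by omega
  rw [hidx]
  have hDnat : (2*m+1)‼ * (2^m * m !) = (2*m+1) * (2*m)! := by
    rw [← Nat.doubleFactorial_two_mul, ← Nat.factorial_eq_mul_doubleFactorial]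
    exact Nat.factorial_succ _
  have hD : ((2*m+1)‼ : ℝ) = (2*(m:ℝ)+1) * ((2*m)! : ℝ) / ((2:ℝ)^m * (m ! : ℝ)) := by
    rw [eq_div_iff (by positivity)]
    exact_mod_cast hDnat
  have hFnat : (2*(m+2))! = (2*m+4) * ((2*m+3) * ((2*m+2) * ((2*m+1) * (2*m)!))) := by
    rw [show 2*(m+2) = (2*m+3)+1 by omega, Nat.factorial_succ,
      show 2*m+3 = (2*m+2)+1 by omega, Nat.factorial_succ,
      show 2*m+2 = (2*m+1)+1 by omega, Nat.factorial_succ,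
      show 2*m+1 = (2*m)+1 by omega, Nat.factorial_succ]
  have hF : ((2*(m+2))! : ℝ)
      = (2*(m:ℝ)+4) * ((2*(m:ℝ)+3) * ((2*(m:ℝ)+2) * ((2*(m:ℝ)+1) * ((2*m)! : ℝ)))) := by
    exact_mod_cast hFnat
  have hQ : ((2 * (m+2) : ℕ) : ℝ) ^ ((5 : ℝ) / 2)
      = (2*(m:ℝ)+4)^2 * (Real.sqrt 2 * Real.sqrt ((m:ℝ)+2)) := by
    have hc : ((2 * (m+2) : ℕ) : ℝ) = 2*(m:ℝ)+4 := by push_cast; ring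
    rw [hc, show (5:ℝ)/2 = ((2:ℕ):ℝ) + (1:ℝ)/2 by norm_num,
      Real.rpow_add (by positivity), Real.rpow_natCast,
      ← Real.sqrt_eq_rpow, show (2*(m:ℝ)+4) = 2*((m:ℝ)+2) by ring,
      Real.sqrt_mul (by norm_num)]
  have hp3 : Real.sqrt (π^3) = π * Real.sqrt π := by
    rw [pow_succ, Real.sqrt_mul (by positivity), Real.sqrt_sq Real.pi_pos.le]
  obtain ⟨S, hS⟩ : ∃ S, Stirling.stirlingSeq (2*m) / (Stirling.stirlingSeq m ^ 2 * Real.sqrt (m:ℝ)) = S :=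
    ⟨_, rfl⟩
  have hb0 : Stirling.stirlingSeq m ≠ 0 := (stirlingPos hm).ne'
  have hu0 : Real.sqrt (m:ℝ) ≠ 0 := by positivity
  have hm0 : (m ! : ℝ) ≠ 0 := by positivity
  have hpi0 : (π:ℝ) ≠ 0 := Real.pi_pos.ne'
  have hs2 : Real.sqrt 2 ≠ 0 := by positivity
  have hsp : Real.sqrt π ≠ 0 := by positivity
  have h1 : (2*(m:ℝ)+2) ≠ 0 := by positivity
  have h2 : (2*(m:ℝ)+3) ≠ 0 := by positivity
  have h3 : (2*(m:ℝ)+4) ≠ 0 := by positivity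
  have hv0 : Real.sqrt ((m:ℝ)+2) ≠ 0 := by positivity
  have hP0 : ((2:ℝ)^m) ≠ 0 := by positivity
  have hS0 : S ≠ 0 := by
    rw [← hS]
    have hA := stirlingPos (show 2*m ≠ 0 by omega)
    have hB := stirlingPos hm
    have hu : (0:ℝ) < Real.sqrt (m:ℝ) := Real.sqrt_pos.mpr hx
    exact (div_pos hA (by positivity)).ne'
  have hc2 : ((2*m)! : ℝ) = S * (((2:ℝ)^m)^2 * ((m)! : ℝ)^2) := by
    rw [← hS, ← c_eq m hm]
    have h4P : (4:ℝ)^m = ((2:ℝ)^m)^2 := by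
      rw [← pow_mul, show m*2 = 2*m by ring, pow_mul]; norm_num
    rw [← h4P, div_mul_cancel₀ _ (by positivity)]
  have hRH : Stirling.stirlingSeq (2*m) * Real.sqrt π / Stirling.stirlingSeq m ^ 2
      = S * Real.sqrt (m:ℝ) * Real.sqrt π := by
    rw [← hS]
    field_simp
  rw [hD, hF, hQ, hp3, hc2, hRH]
  field_simp
  ring

private lemma tendsto_two_mul_atTop : Tendsto (fun m : ℕ => 2*m) atTop atTop := by
  apply tendsto_atTop_atTop_of_monotone (fun a b h => by omega)
  intro b; exact ⟨b, by omega⟩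

/-- As `q → ∞` through even integers (`q = 2k`),
`((q-3)!!)^2 / (π q!) ∼ √2 / (√(π³) q^{5/2})`; that is, the squared Hermite
coefficients of the ReLu activation satisfy `J_q² ∼ √2/(√(π³) q^{5/2})`. -/
theorem relu_hermiteCoeff_sq_asymptotic :
    Tendsto (fun k : ℕ =>
        ((((2 * k - 3)‼ : ℝ) ^ 2 / (π * ((2 * k)! : ℝ))) /
          (Real.sqrt 2 / (Real.sqrt (π ^ 3) * ((2 * k : ℕ) : ℝ) ^ ((5 : ℝ) / 2)))))
      atTop (nhds 1) := by
  refine (tendsto_add_atTop_iff_nat 2).mp ?_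
  have hA : Tendsto (fun m : ℕ =>
      Stirling.stirlingSeq (2*m) * Real.sqrt π / Stirling.stirlingSeq m ^ 2)
      atTop (nhds 1) := by
    have h2m : Tendsto (fun m : ℕ => Stirling.stirlingSeq (2*m)) atTop (nhds (Real.sqrt π)) :=
      Stirling.tendsto_stirlingSeq_sqrt_pi.comp tendsto_two_mul_atTop
    have h1 : Tendsto (fun m : ℕ => Stirling.stirlingSeq m ^ 2) atTop
        (nhds (Real.sqrt π ^ 2)) := Stirling.tendsto_stirlingSeq_sqrt_pi.pow 2
    have hmulc : Tendsto (fun m : ℕ => Stirling.stirlingSeq (2*m) * Real.sqrt π) atTop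
        (nhds (Real.sqrt π * Real.sqrt π)) := h2m.mul tendsto_const_nhds
    have hdiv := hmulc.div h1 (by positivity)
    rwa [show (Real.sqrt π * Real.sqrt π) / (Real.sqrt π ^ 2) = 1 by
      rw [← sq]; exact div_self (by positivity)] at hdiv
  have hB : Tendsto (fun m : ℕ =>
      (2*(m:ℝ)*(2*(m:ℝ)+1)) / ((2*(m:ℝ)+2)*(2*(m:ℝ)+3))) atTop (nhds 1) := by
    have h0 : Tendsto (fun m : ℕ => 1/(m:ℝ)) atTop (nhds 0) :=
      tendsto_one_div_atTop_nhds_zero_nat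
    have hg : Tendsto (fun m : ℕ => (4 + 2*(1/(m:ℝ))) / (4 + 10*(1/(m:ℝ)) + 6*(1/(m:ℝ))^2))
        atTop (nhds 1) := by
      have hnum : Tendsto (fun m : ℕ => 4 + 2*(1/(m:ℝ))) atTop (nhds (4 + 2*0)) :=
        tendsto_const_nhds.add (h0.const_mul 2)
      have hden : Tendsto (fun m : ℕ => 4 + 10*(1/(m:ℝ)) + 6*(1/(m:ℝ))^2) atTop
          (nhds (4 + 10*0 + 6*0^2)) :=
        (tendsto_const_nhds.add (h0.const_mul 10)).add ((h0.pow 2).const_mul 6)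
      have := hnum.div hden (by norm_num)
      rwa [show ((4:ℝ) + 2*0) / (4 + 10*0 + 6*0^2) = 1 by norm_num] at this
    refine hg.congr' ?_
    filter_upwards [eventually_ge_atTop 1] with m hm
    have hx : (0:ℝ) < (m:ℝ) := by exact_mod_cast hm
    field_simp
    ring
  have hC : Tendsto (fun m : ℕ =>
      ((m:ℝ)+2) * Real.sqrt ((m:ℝ)+2) / ((m:ℝ) * Real.sqrt (m:ℝ))) atTop (nhds 1) := by
    have h0 : Tendsto (fun m : ℕ => 1/(m:ℝ)) atTop (nhds 0) :=
      tendsto_one_div_atTop_nhds_zero_nat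
    have hq : Tendsto (fun m : ℕ => 1 + 2*(1/(m:ℝ))) atTop (nhds 1) := by
      have hq' : Tendsto (fun m : ℕ => 1 + 2*(1/(m:ℝ))) atTop (nhds (1 + 2*0)) :=
        tendsto_const_nhds.add (h0.const_mul 2)
      simpa using hq'
    have hsq : Tendsto (fun m : ℕ => Real.sqrt (1 + 2*(1/(m:ℝ)))) atTop (nhds 1) := by
      have := (Real.continuous_sqrt.tendsto 1).comp hq
      rw [Real.sqrt_one] at this
      exact this
    have hmul := hq.mul hsq
    rw [mul_one] at hmul
    refine hmul.congr' ?_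
    filter_upwards [eventually_ge_atTop 1] with m hm
    have hx : (0:ℝ) < (m:ℝ) := by exact_mod_cast hm
    have heq : 1 + 2*(1/(m:ℝ)) = ((m:ℝ)+2)/(m:ℝ) := by field_simp
    rw [heq, Real.sqrt_div (by positivity), _root_.div_mul_div_comm]
  have hfin := (hA.mul hB).mul hC
  rw [show ((1:ℝ)*1*1) = 1 by norm_num] at hfin
  refine Tendsto.congr' ?_ hfin
  filter_upwards [eventually_ge_atTop 1] with m hm
  exact (key m (by omega)).symm
end

section
/- There exists a constant C > 0 such that for all even q ≥ 4, ((q-3)!!)² / q! ≤ C · q^{-5/2}; consequently the ReLu Hermite coefficients satisfy J_q(σ) ≲ q^{-5/4}. -/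
open MeasureTheory ProbabilityTheory Polynomial Real Nat
open Filter Set

noncomputable def H (n : ℕ) : Polynomial ℝ := (Polynomial.hermite n).map (Int.castRingHom ℝ)

lemma aeval_hermite_eq (z : ℝ) (n : ℕ) : (Polynomial.aeval z (Polynomial.hermite n)) = (H n).eval z := by
  rw [Polynomial.aeval_def, Polynomial.eval₂_eq_eval_map, H, algebraMap_int_eq]

lemma H_succ (n : ℕ) : H (n+1) = X * H n - derivative (H n) := by
  unfold H
  rw [hermite_succ]
  simp [Polynomial.map_sub, Polynomial.map_mul, Polynomial.derivative_map]

lemma H_eval_zero (n : ℕ) : (H n).eval 0 = ((Polynomial.hermite n).coeff 0 : ℝ) := by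
  rw [← Polynomial.coeff_zero_eq_eval_zero, H, Polynomial.coeff_map]
  simp

lemma mono_integrable (k : ℕ) : Integrable (fun x : ℝ => x ^ k * rexp (-x ^ 2 / 2)) := by
  refine (integrable_rpow_mul_exp_neg_mul_sq (b := 1/2) (by norm_num)
    (s := k) ((by norm_num : (-1:ℝ) < 0).trans_le (Nat.cast_nonneg k))).congr
    (Filter.Eventually.of_forall fun x => ?_)
  show (x : ℝ) ^ (k : ℝ) * rexp (-(1/2) * x ^ 2) = _
  rw [Real.rpow_natCast, show -(1/2 : ℝ) * x ^ 2 = -x^2/2 by ring]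

lemma mono_tendsto (k : ℕ) : Tendsto (fun x : ℝ => x ^ k * rexp (-x ^ 2 / 2)) atTop (nhds 0) := by
  have h1 : Tendsto (fun x : ℝ => rexp (-(1/2) * x)) atTop (nhds 0) := by
    exact Real.tendsto_exp_atBot.comp
      (tendsto_id.const_mul_atTop_of_neg (show (-(1/2):ℝ) < 0 by norm_num))
  have h2 := (rpow_mul_exp_neg_mul_sq_isLittleO_exp_neg (by norm_num : (0:ℝ) < 1/2)
    (k : ℝ)).isBigO.trans_tendsto h1
  refine h2.congr fun x => ?_
  show (x : ℝ) ^ (k : ℝ) * rexp (-(1/2) * x ^ 2) = _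
  rw [Real.rpow_natCast, show -(1/2 : ℝ) * x ^ 2 = -x^2/2 by ring]

lemma poly_integrable (P : Polynomial ℝ) : Integrable (fun x : ℝ => P.eval x * rexp (-x ^ 2 / 2)) := by
  have : (fun x : ℝ => P.eval x * rexp (-x ^ 2 / 2))
      = fun x => ∑ k ∈ Finset.range (P.natDegree + 1), P.coeff k * (x ^ k * rexp (-x ^ 2 / 2)) := by
    funext x
    rw [Polynomial.eval_eq_sum_range, Finset.sum_mul]
    simp [mul_assoc]
  rw [this]
  exact integrable_finset_sum _ fun k _ => (mono_integrable k).const_mul _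

lemma poly_tendsto (P : Polynomial ℝ) :
    Tendsto (fun x : ℝ => P.eval x * rexp (-x ^ 2 / 2)) atTop (nhds 0) := by
  have : (fun x : ℝ => P.eval x * rexp (-x ^ 2 / 2))
      = fun x => ∑ k ∈ Finset.range (P.natDegree + 1), P.coeff k * (x ^ k * rexp (-x ^ 2 / 2)) := by
    funext x
    rw [Polynomial.eval_eq_sum_range, Finset.sum_mul]
    simp [mul_assoc]
  rw [this]
  have : Tendsto (fun x : ℝ => ∑ k ∈ Finset.range (P.natDegree + 1),
      P.coeff k * (x ^ k * rexp (-x ^ 2 / 2))) atTop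
      (nhds (∑ k ∈ Finset.range (P.natDegree + 1), P.coeff k * 0)) :=
    tendsto_finset_sum _ fun k _ => tendsto_const_nhds.mul (mono_tendsto k)
  simpa using this

lemma poly_deriv (P : Polynomial ℝ) (x : ℝ) :
    HasDerivAt (fun z : ℝ => P.eval z * rexp (-z ^ 2 / 2))
      ((derivative P - X * P).eval x * rexp (-x ^ 2 / 2)) x := by
  have h1 : HasDerivAt (fun z : ℝ => P.eval z) ((derivative P).eval x) x := P.hasDerivAt x
  have h0 : HasDerivAt (fun z : ℝ => -z ^ 2 / 2) (-x) x := by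
    have := (hasDerivAt_pow 2 x).neg.div_const 2
    refine this.congr_deriv ?_
    norm_num
    ring
  have h2 : HasDerivAt (fun z : ℝ => rexp (-z ^ 2 / 2)) (-x * rexp (-x ^ 2 / 2)) x := by
    simpa [mul_comm] using h0.exp
  have := h1.mul h2
  refine this.congr_deriv ?_
  simp
  ring

lemma key_integral (P : Polynomial ℝ) :
    ∫ z in Ioi (0:ℝ), (derivative P - X * P).eval z * rexp (-z ^ 2 / 2) = -P.eval 0 := by
  have := integral_Ioi_of_hasDerivAt_of_tendsto' (a := 0)
    (fun x _ => poly_deriv P x) ((poly_integrable _).integrableOn) (poly_tendsto P)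
  simpa using this

lemma herm_poly_id (m : ℕ) :
    derivative (-(X * H (m+1) + H m)) - X * (-(X * H (m+1) + H m)) = X * H (m+2) := by
  have h1 : derivative (H (m+1)) = X * H (m+1) - H (m+2) := by
    rw [H_succ (m+1)]; ring
  have h0 : derivative (H m) = X * H m - H (m+1) := by
    rw [H_succ m]; ring
  simp only [derivative_neg, derivative_add, derivative_mul, derivative_X, one_mul, h1, h0]
  ring

lemma I2 (m : ℕ) :
    ∫ z in Ioi (0:ℝ), z * (H (m+2)).eval z * rexp (-z ^ 2 / 2) = (H m).eval 0 := by
  have hk := key_integral (-(X * H (m+1) + H m))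
  rw [herm_poly_id m] at hk
  have : (fun z : ℝ => z * (H (m+2)).eval z * rexp (-z ^ 2 / 2))
      = fun z : ℝ => (X * H (m+2)).eval z * rexp (-z ^ 2 / 2) := by
    funext z; simp
  rw [this, hk]
  simp

lemma exp_Ioi : ∫ z in Ioi (0:ℝ), rexp (-z ^ 2 / 2) = Real.sqrt (2*π) / 2 := by
  have := integral_gaussian_Ioi (1/2)
  rw [show π / (1/2) = 2 * π by ring] at this
  rw [← this]
  apply setIntegral_congr_fun measurableSet_Ioi
  intro x _
  show rexp (-x ^ 2 / 2) = rexp (-(1/2) * x ^ 2)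
  rw [show -(1/2 : ℝ) * x ^ 2 = -x^2/2 by ring]

lemma I1 : ∫ z in Ioi (0:ℝ), z * (H 1).eval z * rexp (-z ^ 2 / 2) = Real.sqrt (2*π) / 2 := by
  have hk := key_integral (-X : Polynomial ℝ)
  have hid : derivative (-X : Polynomial ℝ) - X * (-X) = X * X - 1 := by
    simp; ring
  rw [hid] at hk
  simp only [eval_sub, eval_mul, eval_X, eval_one, eval_neg, neg_zero] at hk
  -- hk : ∫ z in Ioi 0, (z * z - 1) * rexp (-z^2/2) = 0
  have hint1 : IntegrableOn (fun z : ℝ => (X*X - 1 : Polynomial ℝ).eval z * rexp (-z ^ 2 / 2)) (Ioi 0) :=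
    (poly_integrable _).integrableOn
  simp only [eval_sub, eval_mul, eval_X, eval_one] at hint1
  have hint2 : IntegrableOn (fun z : ℝ => rexp (-z ^ 2 / 2)) (Ioi (0:ℝ)) := by
    have := integrable_exp_neg_mul_sq (show (0:ℝ) < 1/2 by norm_num)
    refine (this.congr (Filter.Eventually.of_forall fun x => ?_)).integrableOn
    show rexp (-(1/2) * x ^ 2) = rexp (-x ^ 2 / 2)
    rw [show -(1/2 : ℝ) * x ^ 2 = -x^2/2 by ring]
  have : (fun z : ℝ => z * (H 1).eval z * rexp (-z ^ 2 / 2))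
      = fun z : ℝ => ((z * z - 1) * rexp (-z ^ 2 / 2) + rexp (-z ^ 2 / 2)) := by
    funext z
    have : H 1 = X := by unfold H; rw [hermite_one]; simp
    rw [this]; simp; ring
  rw [this, integral_add hint1 hint2, hk, exp_Ioi, zero_add]

lemma gauss_integral_eq (g : ℝ → ℝ) :
    ∫ z, g z ∂(gaussianReal 0 1) = ∫ z, gaussianPDFReal 0 1 z * g z := by
  rw [gaussianReal_of_var_ne_zero 0 one_ne_zero]
  have hpdf : gaussianPDF 0 1 = fun x => ((gaussianPDFReal 0 1 x).toNNReal : ENNReal) := rfl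
  rw [hpdf, integral_withDensity_eq_integral_smul (measurable_gaussianPDFReal 0 1).real_toNNReal g]
  congr 1
  funext x
  rw [NNReal.smul_def, Real.coe_toNNReal _ (gaussianPDFReal_nonneg _ _ _)]
  rfl

lemma pdf01 (x : ℝ) : gaussianPDFReal 0 1 x = (Real.sqrt (2*π))⁻¹ * rexp (-x ^ 2 / 2) := by
  simp [gaussianPDFReal]

lemma relu_int (q : ℕ) :
    ∫ z, max z 0 * (Polynomial.aeval z (Polynomial.hermite q)) ∂(gaussianReal 0 1)
      = (Real.sqrt (2*π))⁻¹ * ∫ z in Ioi (0:ℝ), z * (H q).eval z * rexp (-z ^ 2 / 2) := by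
  rw [gauss_integral_eq]
  have h1 : (fun z : ℝ => gaussianPDFReal 0 1 z * (max z 0 * (Polynomial.aeval z (Polynomial.hermite q))))
      = fun z : ℝ => (Real.sqrt (2*π))⁻¹ * (max z 0 * (H q).eval z * rexp (-z ^ 2 / 2)) := by
    funext z
    rw [pdf01, aeval_hermite_eq]
    ring
  rw [h1, integral_const_mul]
  congr 1
  have h2 : (fun z : ℝ => max z 0 * (H q).eval z * rexp (-z ^ 2 / 2))
      = Set.indicator (Ioi (0:ℝ)) (fun z : ℝ => z * (H q).eval z * rexp (-z ^ 2 / 2)) := by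
    funext z
    by_cases hz : z ∈ Ioi (0:ℝ)
    · rw [Set.indicator_of_mem hz, max_eq_left (le_of_lt hz)]
    · rw [Set.indicator_of_notMem hz, max_eq_right (by simpa [not_lt] using hz), zero_mul, zero_mul]
  rw [h2, integral_indicator measurableSet_Ioi]

lemma dfkey : ∀ n : ℕ, ((2*n+1)‼ : ℝ)^2 * (2*(n:ℝ)+3) ≤ ((2*n+2)‼ : ℝ)^2 := by
  intro n
  induction n with
  | zero => norm_num [Nat.doubleFactorial]
  | succ n ih =>
    rw [show 2*(n+1)+1 = (2*n+1)+2 from by ring, Nat.doubleFactorial_add_two (2*n+1),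
        show 2*(n+1)+2 = (2*n+2)+2 from by ring, Nat.doubleFactorial_add_two (2*n+2)]
    push_cast
    have hA : (0:ℝ) ≤ ((2*n+1)‼ : ℝ) := Nat.cast_nonneg _
    have hn : (0:ℝ) ≤ (n:ℝ) := Nat.cast_nonneg _
    nlinarith [ih, sq_nonneg ((2*n+1)‼ : ℝ), mul_nonneg hn (sq_nonneg ((2*n+1)‼ : ℝ)),
      mul_le_mul_of_nonneg_left ih (sq_nonneg (2*(n:ℝ)+4)),
      mul_nonneg (mul_nonneg hn hn) (sq_nonneg ((2*n+1)‼ : ℝ))]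

lemma fact_df (n : ℕ) : ((2*n+4)! : ℝ)
    = (2*(n:ℝ)+4) * (2*(n:ℝ)+3) * ((2*n+2)‼ : ℝ) * ((2*n+1)‼ : ℝ) := by
  have h := Nat.factorial_eq_mul_doubleFactorial (2*n+3)
  rw [show 2*n+4 = (2*n+3)+1 from by ring, h,
      show 2*n+3+1 = (2*n+2)+2 from by ring, Nat.doubleFactorial_add_two (2*n+2),
      show 2*n+3 = (2*n+1)+2 from by ring, Nat.doubleFactorial_add_two (2*n+1)]
  push_cast
  ring

lemma main_ineq (n : ℕ) :
    (((2*n+1)‼ : ℝ))^2 / ((2*n+4)! : ℝ) ≤ 4 * (((2*n+4 : ℕ)) : ℝ) ^ (-(5:ℝ)/2) := by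
  have hA : (0:ℝ) < ((2*n+1)‼ : ℝ) := Nat.cast_pos.mpr (Nat.doubleFactorial_pos _)
  have hB : (0:ℝ) < ((2*n+2)‼ : ℝ) := Nat.cast_pos.mpr (Nat.doubleFactorial_pos _)
  have hq : (((2*n+4 : ℕ)) : ℝ) = 2*(n:ℝ)+4 := by push_cast; ring
  have hq0 : (0:ℝ) ≤ 2*(n:ℝ)+4 := by positivity
  have hF := fact_df n
  have hFpos : (0:ℝ) < ((2*n+4)! : ℝ) := Nat.cast_pos.mpr (Nat.factorial_pos _)
  rw [hq]
  have hL0 : (0:ℝ) ≤ ((2*n+1)‼ : ℝ)^2 / ((2*n+4)! : ℝ) := by positivity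
  have hR0 : (0:ℝ) ≤ 4 * (2*(n:ℝ)+4) ^ (-(5:ℝ)/2) := by positivity
  have hsq : (((2*n+1)‼ : ℝ)^2 / ((2*n+4)! : ℝ))^2 ≤ (4 * (2*(n:ℝ)+4) ^ (-(5:ℝ)/2))^2 := by
    have e1 : ((2*(n:ℝ)+4) ^ (-(5:ℝ)/2))^2 = ((2*(n:ℝ)+4)^(5:ℕ))⁻¹ := by
      rw [← Real.rpow_natCast ((2*(n:ℝ)+4) ^ (-(5:ℝ)/2)) 2, ← Real.rpow_mul hq0]
      norm_num
    have e2 : (4 * (2*(n:ℝ)+4) ^ (-(5:ℝ)/2))^2 = 16 / (2*(n:ℝ)+4)^(5:ℕ) := by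
      rw [mul_pow, e1]; ring
    rw [e2, div_pow, div_le_div_iff₀ (by positivity) (by positivity)]
    have hd := dfkey n
    have step1 : (2*(n:ℝ)+4)^3 ≤ 16 * (2*(n:ℝ)+3)^3 := by
      have hn : (0:ℝ) ≤ (n:ℝ) := Nat.cast_nonneg _
      nlinarith [pow_nonneg hn 3, pow_nonneg hn 2, hn]
    have h2 : ((2*n+1)‼ : ℝ)^2*(2*(n:ℝ)+3) * ((2*n+1)‼ : ℝ)^2
        ≤ ((2*n+2)‼ : ℝ)^2 * ((2*n+1)‼ : ℝ)^2 :=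
      mul_le_mul_of_nonneg_right hd (sq_nonneg _)
    calc (((2*n+1)‼ : ℝ)^2)^2 * (2*(n:ℝ)+4)^(5:ℕ)
        = ((2*n+1)‼ : ℝ)^4 * ((2*(n:ℝ)+4)^2 * (2*(n:ℝ)+4)^3) := by ring
      _ ≤ ((2*n+1)‼ : ℝ)^4 * ((2*(n:ℝ)+4)^2 * (16 * (2*(n:ℝ)+3)^3)) := by
          apply mul_le_mul_of_nonneg_left _ (by positivity)
          exact mul_le_mul_of_nonneg_left step1 (by positivity)
      _ = 16*(2*(n:ℝ)+4)^2*(2*(n:ℝ)+3)^2*(((2*n+1)‼ : ℝ)^2*(2*(n:ℝ)+3)*((2*n+1)‼ : ℝ)^2) := by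
          ring
      _ ≤ 16*(2*(n:ℝ)+4)^2*(2*(n:ℝ)+3)^2*(((2*n+2)‼ : ℝ)^2*((2*n+1)‼ : ℝ)^2) :=
          mul_le_mul_of_nonneg_left h2 (by positivity)
      _ = 16 * ((2*(n:ℝ)+4) * (2*(n:ℝ)+3) * ((2*n+2)‼ : ℝ) * ((2*n+1)‼ : ℝ))^2 := by ring
      _ = 16 * (((2*n+4)! : ℝ))^2 := by rw [← hF]
  have := Real.sqrt_le_sqrt hsq
  rwa [Real.sqrt_sq hL0, Real.sqrt_sq hR0] at this

/-- Normalized Hermite coefficient `J_q(σ) = (1/√(q!)) E[σ(Z) H_q(Z)]` of a function `σ`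
with respect to the standard Gaussian measure, `H_q` being the probabilists'
Hermite polynomials. -/
noncomputable def hermiteCoeff (σ : ℝ → ℝ) (q : ℕ) : ℝ :=
  (Real.sqrt (q !))⁻¹ *
    ∫ z, σ z * (Polynomial.aeval z (Polynomial.hermite q)) ∂(gaussianReal 0 1)

lemma Jval (q : ℕ) : hermiteCoeff (fun t => max t 0) q
    = (Real.sqrt (q !))⁻¹ *
      ((Real.sqrt (2*π))⁻¹ * ∫ z in Ioi (0:ℝ), z * (H q).eval z * rexp (-z ^ 2 / 2)) := by
  unfold hermiteCoeff
  rw [relu_int]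

lemma sqrt2pi_pos : (0:ℝ) < Real.sqrt (2*π) := Real.sqrt_pos.mpr (by positivity)

lemma inv_sqrt2pi_le_one : (Real.sqrt (2*π))⁻¹ ≤ 1 := by
  rw [inv_le_one_iff₀]
  right
  rw [show (1:ℝ) = Real.sqrt 1 by simp]
  exact Real.sqrt_le_sqrt (by nlinarith [Real.pi_gt_three])

lemma J1 : hermiteCoeff (fun t => max t 0) 1 = 1/2 := by
  rw [Jval, I1]
  rw [Nat.factorial_one, Nat.cast_one, Real.sqrt_one, inv_one, one_mul]
  field_simp

lemma Jm2 (q m : ℕ) (hq : q = m + 2) : hermiteCoeff (fun t => max t 0) q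
    = (Real.sqrt (q !))⁻¹ * ((Real.sqrt (2*π))⁻¹ * ((Polynomial.hermite m).coeff 0 : ℝ)) := by
  subst hq
  rw [Jval, I2, H_eval_zero]

lemma half_bound (k : ℕ) :
    ((2*k+1)‼ : ℝ) / Real.sqrt ((2*k+4)! : ℝ) ≤ 2 * (((2*k+4:ℕ)):ℝ)^(-(5:ℝ)/4) := by
  have h := main_ineq k
  have hq0 : (0:ℝ) ≤ ((2*k+4:ℕ):ℝ) := Nat.cast_nonneg _
  have hs := Real.sqrt_le_sqrt h
  have e1 : Real.sqrt (((2*k+1)‼ : ℝ)^2 / ((2*k+4)! : ℝ))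
      = ((2*k+1)‼ : ℝ) / Real.sqrt ((2*k+4)! : ℝ) := by
    rw [Real.sqrt_div (sq_nonneg _), Real.sqrt_sq (Nat.cast_nonneg _)]
  have e3 : ((2*k+4:ℕ):ℝ)^(-(5:ℝ)/2) = (((2*k+4:ℕ):ℝ)^(-(5:ℝ)/4))^2 := by
    rw [← Real.rpow_natCast (((2*k+4:ℕ):ℝ)^(-(5:ℝ)/4)) 2, ← Real.rpow_mul hq0]
    norm_num
  have e2 : Real.sqrt (4 * ((2*k+4:ℕ):ℝ)^(-(5:ℝ)/2)) = 2 * ((2*k+4:ℕ):ℝ)^(-(5:ℝ)/4) := by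
    rw [e3, Real.sqrt_mul (by norm_num), Real.sqrt_sq (Real.rpow_nonneg hq0 _),
        show (4:ℝ) = 2^2 by norm_num, Real.sqrt_sq (by norm_num)]
  rw [e1, e2] at hs
  exact hs

/-- There is `C > 0` such that `((q-3)!!)² / q! ≤ C q^{-5/2}` for all even `q ≥ 4`;
consequently the ReLu Hermite coefficients satisfy `J_q(σ) ≲ q^{-5/4}`. -/
theorem relu_hermiteCoeff_bound :
    ∃ C : ℝ, 0 < C ∧
      (∀ q : ℕ, 4 ≤ q → Even q →
        (((q - 3)‼ : ℝ) ^ 2 / (q ! : ℝ)) ≤ C * (q : ℝ) ^ (-(5 : ℝ) / 2)) ∧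
      (∀ q : ℕ, 1 ≤ q →
        |hermiteCoeff (fun t => max t 0) q| ≤ C * (q : ℝ) ^ (-(5 : ℝ) / 4)) := by
  refine ⟨4, by norm_num, ?_, ?_⟩
  · intro q hq4 hqe
    obtain ⟨n, rfl⟩ : ∃ n, q = 2*n+4 := by
      obtain ⟨k, hk⟩ := hqe
      exact ⟨k - 2, by omega⟩
    rw [show 2*n+4-3 = 2*n+1 from by omega]
    exact main_ineq n
  · intro q hq1
    match q, hq1 with
    | 1, _ =>
      rw [J1, Nat.cast_one, Real.one_rpow, abs_of_pos (by norm_num : (0:ℝ) < 1/2)]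
      norm_num
    | (m+2), _ =>
      rcases Nat.even_or_odd m with hme | hmo
      · -- even m
        obtain ⟨t, rfl⟩ : ∃ t, m = 2*t := by
          obtain ⟨k, hk⟩ := hme; exact ⟨k, by omega⟩
        have hc := Polynomial.coeff_hermite_explicit t 0
        rw [Nat.add_zero] at hc
        rw [Jm2 (2*t+2) (2*t) rfl, hc]
        simp only [Int.cast_mul, Int.cast_pow, Int.cast_neg, Int.cast_one, Int.cast_natCast,
          Nat.choose_zero_right, Nat.cast_one, mul_one]
        rw [abs_mul, abs_mul, abs_mul, abs_pow, abs_neg, abs_one, one_pow, one_mul,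
            abs_of_nonneg (inv_nonneg.mpr (Real.sqrt_nonneg _)),
            abs_of_nonneg (inv_nonneg.mpr (Real.sqrt_nonneg _)),
            abs_of_nonneg (Nat.cast_nonneg _)]
        rcases Nat.eq_zero_or_pos t with rfl | ht
        · -- q = 2
          rw [show (2*0+2) = 2 from rfl, show (2*0-1) = 0 from rfl]
          simp only [Nat.doubleFactorial, Nat.cast_one, mul_one, Nat.cast_ofNat]
          have h1 : (Real.sqrt ((2:ℕ)! : ℝ))⁻¹ ≤ 1 := by
            rw [inv_le_one_iff₀]
            right
            rw [show (1:ℝ) = Real.sqrt 1 by simp]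
            exact Real.sqrt_le_sqrt (by norm_num [Nat.factorial])
          have h2 : (2:ℝ)^(-(2:ℝ)) ≤ (2:ℝ)^(-(5:ℝ)/4) :=
            Real.rpow_le_rpow_of_exponent_le (by norm_num) (by norm_num)
          have h3 : (2:ℝ)^(-(2:ℝ)) = 1/4 := by
            rw [show (-(2:ℝ)) = -((2:ℕ):ℝ) by norm_num, Real.rpow_neg (by norm_num),
                Real.rpow_natCast]
            norm_num
          have h4 : (Real.sqrt ((2:ℕ)! : ℝ))⁻¹ * (Real.sqrt (2*π))⁻¹ ≤ 1 :=
            mul_le_one₀ h1 (inv_nonneg.mpr (Real.sqrt_nonneg _)) inv_sqrt2pi_le_one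
          calc (Real.sqrt ((2:ℕ)! : ℝ))⁻¹ * (Real.sqrt (2*π))⁻¹ ≤ 1 := h4
            _ ≤ 4 * (2:ℝ)^(-(5:ℝ)/4) := by linarith
        · obtain ⟨k, rfl⟩ : ∃ k, t = k + 1 := ⟨t - 1, by omega⟩
          rw [show 2*(k+1)+2 = 2*k+4 from by ring, show 2*(k+1)-1 = 2*k+1 from by omega]
          have hb := half_bound k
          have hrpos : (0:ℝ) < (((2*k+4:ℕ)):ℝ)^(-(5:ℝ)/4) :=
            Real.rpow_pos_of_pos (by positivity) _
          calc (Real.sqrt (((2*k+4)! : ℕ) : ℝ))⁻¹ * ((Real.sqrt (2*π))⁻¹ * ((2*k+1)‼ : ℝ))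
              = (Real.sqrt (2*π))⁻¹ * (((2*k+1)‼ : ℝ) / Real.sqrt (((2*k+4)! : ℕ) : ℝ)) := by
                rw [div_eq_mul_inv]; ring
            _ ≤ 1 * (2 * (((2*k+4:ℕ)):ℝ)^(-(5:ℝ)/4)) :=
                mul_le_mul inv_sqrt2pi_le_one hb (by positivity) zero_le_one
            _ ≤ 4 * (((2*k+4:ℕ)):ℝ)^(-(5:ℝ)/4) := by nlinarith [hrpos]
      · -- odd m : coefficient is zero
        have hc : (Polynomial.hermite m).coeff 0 = 0 :=
          Polynomial.coeff_hermite_of_odd_add (by simpa using hmo)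
        rw [Jm2 (m+2) m rfl, hc]
        simp only [Int.cast_zero, mul_zero, abs_zero]
        positivity
end

section
/- Suppose J_q ≤ A q^{-α} for all q ≥ 1 with α > 1/2 and some constant A > 0. Then, choosing Q = ⌊log n / (3 log 3)⌋ in the bound d₂(F,Z) ≤ C‖σ‖ n^{-1/4} √(Σ_{q=0}^Q J_q² q 3^q) + (3/2)√(Σ_{q>Q} J_q²), one obtains d₂(F,Z) ≤ C' (log n)^{-(α−1/2)} for a constant C' depending only on A, α, C, ‖σ‖. -/
open Real

lemma bernoulli_nonpos {s p : ℝ} (hs : -1 < s) (hp : p ≤ 0) :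
    1 + p * s ≤ (1 + s) ^ p := by
  have h1 : (0:ℝ) < 1 + s := by linarith
  have h2 : 1 + p * s ≤ Real.exp (p * s) := by
    have := Real.add_one_le_exp (p * s); linarith
  have h3 : Real.log (1 + s) ≤ s := by
    have := Real.log_le_sub_one_of_pos h1; linarith
  have h4 : p * s ≤ p * Real.log (1 + s) := mul_le_mul_of_nonpos_left h3 hp
  calc 1 + p * s ≤ Real.exp (p * s) := h2
    _ ≤ Real.exp (p * Real.log (1 + s)) := Real.exp_le_exp.mpr h4
    _ = (1 + s) ^ p := by rw [Real.rpow_def_of_pos h1, mul_comm]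

lemma key_step {α : ℝ} (hα : 1 / 2 < α) {x : ℝ} (hx : 1 ≤ x) :
    (2 * α - 1) * (x + 1) ^ (-(2 * α)) ≤ x ^ (1 - 2 * α) - (x + 1) ^ (1 - 2 * α) := by
  have hx1 : (0:ℝ) < x + 1 := by linarith
  set p := 1 - 2 * α with hp
  have hple : p ≤ 0 := by simp [hp]; linarith
  have hs : (-1 : ℝ) < -1 / (x + 1) := by
    rw [neg_div]
    have : 1 / (x + 1) < 1 := by
      rw [div_lt_one hx1]; linarith
    linarith
  have hB := bernoulli_nonpos hs hple
  have hfrac : 1 + (-1 / (x + 1)) = x / (x + 1) := by field_simp; ring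
  rw [hfrac] at hB
  -- x ^ p = (x+1)^p * (x/(x+1))^p
  have hsplit : x ^ p = (x + 1) ^ p * (x / (x + 1)) ^ p := by
    rw [← Real.mul_rpow (le_of_lt hx1) (by positivity)]
    congr 1
    field_simp
  have hpow : (x + 1) ^ p * (x / (x + 1)) ^ p ≥
      (x + 1) ^ p * (1 + p * (-1 / (x + 1))) := by
    apply mul_le_mul_of_nonneg_left hB (Real.rpow_nonneg (le_of_lt hx1) p)
  have hexp0 : (x + 1) ^ p = (x + 1) ^ (-(2 * α)) * (x + 1) := by
    nth_rewrite 3 [← Real.rpow_one (x+1)]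
    rw [← Real.rpow_add hx1]
    congr 1; rw [hp]; ring
  have hexp : (x + 1) ^ p / (x + 1) = (x + 1) ^ (-(2 * α)) := by
    rw [hexp0, mul_div_assoc, div_self (ne_of_gt hx1), mul_one]
  have h5 : (x + 1) ^ p * (1 + p * (-1 / (x + 1)))
      = (x + 1) ^ p + (2 * α - 1) * ((x + 1) ^ p / (x + 1)) := by
    field_simp
    ring
  rw [h5, hexp] at hpow
  rw [hsplit] at *
  linarith [hpow]

lemma tail_sum_aux {α : ℝ} (hα : 1 / 2 < α) {y : ℝ} (hy : 1 ≤ y) : ∀ N : ℕ,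
    ∑ k ∈ Finset.range (N + 1), (y + k) ^ (-(2 * α)) ≤
      y ^ (-(2 * α)) + (y ^ (1 - 2 * α) - (y + N) ^ (1 - 2 * α)) / (2 * α - 1) := by
  have hc : (0:ℝ) < 2 * α - 1 := by linarith
  intro N
  induction N with
  | zero => simp
  | succ N ih =>
    rw [Finset.sum_range_succ]
    have hx : 1 ≤ y + N := by
      have : (0:ℝ) ≤ N := Nat.cast_nonneg N
      linarith
    have hkey := key_step hα hx
    have hcast : (↑(N + 1) : ℝ) = (N : ℝ) + 1 := by push_cast; ring
    rw [hcast]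
    have h1 : (y + ((N:ℝ) + 1)) ^ (-(2 * α))
        ≤ ((y + N) ^ (1 - 2 * α) - (y + N + 1) ^ (1 - 2 * α)) / (2 * α - 1) := by
      rw [le_div_iff₀ hc]
      have : y + ((N:ℝ) + 1) = y + N + 1 := by ring
      rw [this]
      linarith
    have h2 : (y ^ (1 - 2 * α) - (y + N) ^ (1 - 2 * α)) / (2 * α - 1)
        + ((y + N) ^ (1 - 2 * α) - (y + N + 1) ^ (1 - 2 * α)) / (2 * α - 1)
        = (y ^ (1 - 2 * α) - (y + ((N:ℝ) + 1)) ^ (1 - 2 * α)) / (2 * α - 1) := by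
      have : y + ((N:ℝ) + 1) = y + N + 1 := by ring
      rw [this]; ring
    linarith
lemma tail_sum_bound {α : ℝ} (hα : 1 / 2 < α) {y : ℝ} (hy : 1 ≤ y) (N : ℕ) :
    ∑ k ∈ Finset.range N, (y + k) ^ (-(2 * α)) ≤
      (2 * α / (2 * α - 1)) * y ^ (1 - 2 * α) := by
  have hc : (0:ℝ) < 2 * α - 1 := by linarith
  have hconst : y ^ (1 - 2 * α) + y ^ (1 - 2 * α) / (2 * α - 1)
      = (2 * α / (2 * α - 1)) * y ^ (1 - 2 * α) := by
    field_simp; ring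
  match N with
  | 0 =>
    simp only [Finset.range_zero, Finset.sum_empty]
    exact mul_nonneg (div_nonneg (by linarith) (by linarith))
      (Real.rpow_nonneg (by linarith) _)
  | (M + 1) =>
    have h := tail_sum_aux hα hy M
    have h0 : (0:ℝ) ≤ (y + M) ^ (1 - 2 * α) := Real.rpow_nonneg (by positivity) _
    have h1 : y ^ (-(2 * α)) ≤ y ^ (1 - 2 * α) :=
      Real.rpow_le_rpow_of_exponent_le hy (by linarith)
    have h2 : (y ^ (1 - 2 * α) - (y + M) ^ (1 - 2 * α)) / (2 * α - 1)
        ≤ y ^ (1 - 2 * α) / (2 * α - 1) := by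
      gcongr; linarith
    linarith

set_option maxHeartbeats 1000000 in
/-- Suppose `J_q ≤ A q^{-α}` for `q ≥ 1`, with `α > 1/2`.  Choosing
`Q = ⌊log n / (3 log 3)⌋` in the bound
`d₂(F,Z) ≤ C ‖σ‖ n^{-1/4} √(∑_{q≤Q} J_q² q 3^q) + (3/2) √(∑_{q>Q} J_q²)`,
one obtains `d₂(F,Z) ≤ C' (log n)^{-(α-1/2)}` for a constant `C'` depending only on
`A, α, C, ‖σ‖` (here `S = ‖σ‖` and `D = d₂(F,Z)`). -/
theorem polynomial_decay_log_rate
    (A α C S : ℝ) (hA : 0 < A) (hα : 1 / 2 < α) (hC : 0 < C) (hS : 0 ≤ S) :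
    ∃ C' : ℝ, 0 < C' ∧ ∀ n : ℕ, 2 ≤ n → ∀ J : ℕ → ℝ, ∀ D : ℝ,
      (∀ q : ℕ, 1 ≤ q → |J q| ≤ A * (q : ℝ) ^ (-α)) →
      (D ≤ C * S * (n : ℝ) ^ (-(1 : ℝ) / 4) *
          Real.sqrt (∑ q ∈ Finset.range (⌊Real.log n / (3 * Real.log 3)⌋₊ + 1),
            J q ^ 2 * q * 3 ^ q) +
        (3 / 2) * Real.sqrt (∑' k : ℕ,
          J (⌊Real.log n / (3 * Real.log 3)⌋₊ + 1 + k) ^ 2)) →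
      D ≤ C' * (Real.log n) ^ (-(α - 1 / 2)) := by
  have h2a : (0:ℝ) < 2 * α - 1 := by linarith
  have hlog3 : (0:ℝ) < Real.log 3 := Real.log_pos (by norm_num)
  have hlog2 : (0:ℝ) < Real.log 2 := Real.log_pos (by norm_num)
  set K : ℝ := 2 * α / (2 * α - 1) with hK
  have hKpos : 0 < K := div_pos (by linarith) h2a
  set ε : ℝ := 1 / (6 * (2 * α + 1)) with hε
  have hεpos : 0 < ε := by
    apply div_pos one_pos; linarith
  set c₂ : ℝ := 1 / (3 * Real.log 3) + 1 / Real.log 2 with hc₂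
  have hc₂pos : 0 < c₂ := by
    apply add_pos (div_pos one_pos (by linarith)) (div_pos one_pos hlog2)
  set c₁ : ℝ := C * S * A * c₂ * ε ^ (-(α + 1/2)) with hc₁
  set c₃ : ℝ := (3/2) * A * Real.sqrt K * (3 * Real.log 3) ^ (α - 1/2) with hc₃
  have hc₁nn : 0 ≤ c₁ :=
    mul_nonneg (mul_nonneg (mul_nonneg (mul_nonneg hC.le hS) hA.le) hc₂pos.le)
      (Real.rpow_nonneg hεpos.le _)
  have hc₃pos : 0 < c₃ := by
    apply mul_pos (mul_pos (mul_pos (by norm_num) hA) (Real.sqrt_pos.mpr hKpos))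
    exact Real.rpow_pos_of_pos (by positivity) _
  refine ⟨c₁ + c₃, by linarith, ?_⟩
  intro n hn J D hJ hD
  have hn1 : (1:ℝ) < n := by exact_mod_cast lt_of_lt_of_le one_lt_two hn
  have hnpos : (0:ℝ) < n := by linarith
  set L := Real.log n with hLdef
  have hLpos : 0 < L := Real.log_pos hn1
  have hlog2L : Real.log 2 ≤ L := Real.log_le_log (by norm_num) (by exact_mod_cast hn)
  set Q := ⌊L / (3 * Real.log 3)⌋₊ with hQdef
  have hQle : (Q:ℝ) ≤ L / (3 * Real.log 3) := Nat.floor_le (by positivity)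
  have hQgt : L / (3 * Real.log 3) < (Q:ℝ) + 1 := by
    exact_mod_cast Nat.lt_floor_add_one (L / (3 * Real.log 3))
  have hQnn : (0:ℝ) ≤ (Q:ℝ) := Nat.cast_nonneg Q
  have hy : (1:ℝ) ≤ (Q:ℝ) + 1 := by linarith
  clear_value L Q
  clear hQdef
  -- tail bound
  have htail : (∑' k : ℕ, J (Q + 1 + k) ^ 2) ≤ A^2 * (K * ((Q:ℝ) + 1) ^ (1 - 2*α)) := by
    apply Real.tsum_le_of_sum_range_le (fun k => sq_nonneg _)
    intro N
    have step : ∀ k ∈ Finset.range N,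
        J (Q+1+k)^2 ≤ A^2 * ((Q:ℝ) + 1 + k) ^ (-(2*α)) := by
      intro k _
      have hm : 1 ≤ Q + 1 + k := by omega
      have hcast : ((Q + 1 + k : ℕ):ℝ) = (Q:ℝ) + 1 + k := by push_cast; ring
      have hb := hJ (Q+1+k) hm
      rw [hcast] at hb
      have hpos : (0:ℝ) < (Q:ℝ) + 1 + (k:ℝ) := by positivity
      calc J (Q+1+k)^2 = |J (Q+1+k)|^2 := (sq_abs _).symm
        _ ≤ (A * ((Q:ℝ)+1+k) ^ (-α))^2 := pow_le_pow_left₀ (abs_nonneg _) hb 2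
        _ = A^2 * (((Q:ℝ)+1+k) ^ (-α))^2 := by ring
        _ = A^2 * ((Q:ℝ)+1+k) ^ (-(2*α)) := by
            congr 1
            rw [← Real.rpow_natCast (((Q:ℝ)+1+(k:ℝ)) ^ (-α)) 2, ← Real.rpow_mul hpos.le]
            congr 1
            push_cast; ring
    calc ∑ k ∈ Finset.range N, J (Q+1+k)^2
        ≤ ∑ k ∈ Finset.range N, A^2 * ((Q:ℝ)+1+k) ^ (-(2*α)) := Finset.sum_le_sum step
      _ = A^2 * ∑ k ∈ Finset.range N, ((Q:ℝ)+1+k) ^ (-(2*α)) := by rw [Finset.mul_sum]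
      _ ≤ A^2 * (K * ((Q:ℝ)+1) ^ (1-2*α)) := by
          apply mul_le_mul_of_nonneg_left ?_ (sq_nonneg A)
          rw [hK]
          exact tail_sum_bound hα hy N
  have h5 : ((Q:ℝ)+1) ^ (1-2*α) ≤ (L / (3*Real.log 3)) ^ (1-2*α) :=
    Real.rpow_le_rpow_of_nonpos (by positivity) hQgt.le (by linarith)
  have h6 : (L / (3*Real.log 3)) ^ (1-2*α) = (3*Real.log 3) ^ (2*α-1) * L ^ (1-2*α) := by
    rw [Real.div_rpow hLpos.le (by positivity), div_eq_mul_inv,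
      ← Real.rpow_neg (by positivity), show -(1-2*α) = 2*α-1 by ring, mul_comm]
  set t := A * Real.sqrt K * (3*Real.log 3)^(α-1/2) * L^(-(α-1/2)) with ht
  have htnn : 0 ≤ t :=
    mul_nonneg (mul_nonneg (mul_nonneg hA.le (Real.sqrt_nonneg _))
      (Real.rpow_nonneg (by positivity) _)) (Real.rpow_nonneg hLpos.le _)
  have htsq : t^2 = A^2 * (K * ((3*Real.log 3)^(2*α-1) * L^(1-2*α))) := by
    have e1 : (Real.sqrt K)^2 = K := Real.sq_sqrt hKpos.le
    have e2 : ((3*Real.log 3)^(α-1/2))^2 = (3*Real.log 3)^(2*α-1) := by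
      rw [← Real.rpow_natCast ((3*Real.log 3)^(α-1/2)) 2,
        ← Real.rpow_mul (by positivity : (0:ℝ) ≤ 3*Real.log 3)]
      congr 1; push_cast; ring
    have e3 : (L^(-(α-1/2)))^2 = L^(1-2*α) := by
      rw [← Real.rpow_natCast (L^(-(α-1/2))) 2, ← Real.rpow_mul hLpos.le]
      congr 1; push_cast; ring
    calc t^2 = A^2 * (Real.sqrt K)^2 * ((3*Real.log 3)^(α-1/2))^2 * (L^(-(α-1/2)))^2 := by
          rw [ht]; ring
      _ = A^2 * (K * ((3*Real.log 3)^(2*α-1) * L^(1-2*α))) := by rw [e1, e2, e3]; ring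
  have htail2 : (∑' k : ℕ, J (Q + 1 + k) ^ 2) ≤ t^2 := by
    rw [htsq]
    refine htail.trans ?_
    have : ((Q:ℝ)+1) ^ (1-2*α) ≤ (3*Real.log 3) ^ (2*α-1) * L ^ (1-2*α) := h5.trans_eq h6
    nlinarith [sq_nonneg A, hKpos.le, mul_le_mul_of_nonneg_left this hKpos.le,
      mul_le_mul_of_nonneg_left
        (mul_le_mul_of_nonneg_left this hKpos.le) (sq_nonneg A)]
  have hsqrt_tail : Real.sqrt (∑' k : ℕ, J (Q + 1 + k) ^ 2) ≤ t :=
    (Real.sqrt_le_sqrt htail2).trans_eq (Real.sqrt_sq htnn)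
  -- main sum bound
  have hterm : ∀ q ∈ Finset.range (Q+1),
      J q ^ 2 * q * 3^q ≤ A^2 * ((Q:ℝ)+1) * 3^Q := by
    intro q hq
    have hqle : q ≤ Q := Nat.lt_succ_iff.mp (Finset.mem_range.mp hq)
    rcases Nat.eq_zero_or_pos q with hq0 | hq1
    · subst hq0
      norm_num
      positivity
    · have h1q : (1:ℝ) ≤ (q:ℝ) := by exact_mod_cast hq1
      have hone : (q:ℝ)^(-α) ≤ 1 :=
        Real.rpow_le_one_of_one_le_of_nonpos h1q (by linarith)
      have hJq : |J q| ≤ A := by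
        have hb := hJ q hq1
        calc |J q| ≤ A * (q:ℝ)^(-α) := hb
          _ ≤ A * 1 := mul_le_mul_of_nonneg_left hone hA.le
          _ = A := mul_one A
      have hsq : J q^2 ≤ A^2 := by
        rw [← sq_abs]; exact pow_le_pow_left₀ (abs_nonneg _) hJq 2
      have hcastle : (q:ℝ) ≤ (Q:ℝ) + 1 := by
        have : (q:ℝ) ≤ (Q:ℝ) := by exact_mod_cast hqle
        linarith
      have hpow : (3:ℝ)^q ≤ (3:ℝ)^Q := pow_le_pow_right₀ (by norm_num) hqle
      exact mul_le_mul (mul_le_mul hsq hcastle (by positivity) (sq_nonneg A)) hpow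
        (by positivity) (by positivity)
  have hSm : (∑ q ∈ Finset.range (Q+1), J q ^ 2 * q * 3^q)
      ≤ A^2 * ((Q:ℝ)+1)^2 * 3^Q := by
    have h := Finset.sum_le_sum hterm
    rw [Finset.sum_const, Finset.card_range, nsmul_eq_mul] at h
    refine h.trans (le_of_eq ?_)
    push_cast; ring
  set M := A * ((Q:ℝ)+1) * Real.sqrt ((3:ℝ)^Q) with hM
  have hMnn : 0 ≤ M := by
    apply mul_nonneg (mul_nonneg hA.le (by positivity)) (Real.sqrt_nonneg _)
  have hM2 : M^2 = A^2 * ((Q:ℝ)+1)^2 * (3:ℝ)^Q := by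
    rw [hM, mul_pow, mul_pow, Real.sq_sqrt (by positivity : (0:ℝ) ≤ (3:ℝ)^Q)]
  have hsqrtSm : Real.sqrt (∑ q ∈ Finset.range (Q+1), J q ^ 2 * q * 3^q) ≤ M := by
    refine (Real.sqrt_le_sqrt ?_).trans_eq (Real.sqrt_sq hMnn)
    rw [hM2]; exact hSm
  -- 3^Q ≤ n^{1/3}
  have h3Q : (3:ℝ)^Q ≤ (n:ℝ) ^ ((1:ℝ)/3) := by
    have e : (3:ℝ)^Q = Real.exp (Real.log 3 * Q) := by
      rw [← Real.rpow_natCast 3 Q, Real.rpow_def_of_pos (by norm_num)]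
    have e2 : (n:ℝ) ^ ((1:ℝ)/3) = Real.exp (L * (1/3)) := by
      rw [Real.rpow_def_of_pos hnpos, ← hLdef]
    rw [e, e2]
    apply Real.exp_le_exp.mpr
    have h7 : (Q:ℝ) * (3 * Real.log 3) ≤ L := by
      rw [← le_div_iff₀ (by positivity)]; exact hQle
    nlinarith
  have hsqrt3Q : Real.sqrt ((3:ℝ)^Q) ≤ (n:ℝ)^((1:ℝ)/6) := by
    calc Real.sqrt ((3:ℝ)^Q) ≤ Real.sqrt ((n:ℝ)^((1:ℝ)/3)) := Real.sqrt_le_sqrt h3Q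
      _ = (n:ℝ)^((1:ℝ)/6) := by
          rw [Real.sqrt_eq_rpow, ← Real.rpow_mul hnpos.le]; norm_num
  have hn112 : (n:ℝ)^(-(1:ℝ)/4) * (n:ℝ)^((1:ℝ)/6) = (n:ℝ)^(-(1:ℝ)/12) := by
    rw [← Real.rpow_add hnpos]; norm_num
  have hQ1L : (Q:ℝ)+1 ≤ c₂ * L := by
    have h1 : (1:ℝ) ≤ L / Real.log 2 := (one_le_div hlog2).mpr hlog2L
    have h2 : c₂ * L = L/(3*Real.log 3) + L/Real.log 2 := by
      rw [hc₂]; field_simp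
    rw [h2]; linarith
  have hLn : L * (n:ℝ)^(-(1:ℝ)/12) ≤ ε^(-(α+1/2)) * L^(-(α-1/2)) := by
    have hlogle : L ≤ (n:ℝ)^ε / ε := by
      rw [hLdef]; exact Real.log_le_rpow_div hnpos.le hεpos
    have hsum : L = L^(α+1/2) * L^(-(α-1/2)) := by
      rw [← Real.rpow_add hLpos, show α+1/2 + -(α-1/2) = 1 by ring, Real.rpow_one]
    have hL1 : L^(α+1/2) ≤ ((n:ℝ)^ε/ε)^(α+1/2) :=
      Real.rpow_le_rpow hLpos.le hlogle (by linarith)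
    have hL2 : ((n:ℝ)^ε/ε)^(α+1/2) = (n:ℝ)^((1:ℝ)/12) * ε^(-(α+1/2)) := by
      rw [Real.div_rpow (Real.rpow_nonneg hnpos.le _) hεpos.le,
        ← Real.rpow_mul hnpos.le, div_eq_mul_inv, ← Real.rpow_neg hεpos.le]
      congr 2
      rw [hε]
      have hne : (2*α+1) ≠ 0 := by linarith
      field_simp
      ring
    have hcancel : (n:ℝ)^((1:ℝ)/12) * (n:ℝ)^(-(1:ℝ)/12) = 1 := by
      rw [← Real.rpow_add hnpos]; norm_num
    calc L * (n:ℝ)^(-(1:ℝ)/12)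
        = L^(α+1/2) * L^(-(α-1/2)) * (n:ℝ)^(-(1:ℝ)/12) := by rw [← hsum]
      _ ≤ ((n:ℝ)^((1:ℝ)/12) * ε^(-(α+1/2))) * L^(-(α-1/2)) * (n:ℝ)^(-(1:ℝ)/12) := by
          rw [← hL2]
          have hnn12 : (0:ℝ) ≤ (n:ℝ)^(-(1:ℝ)/12) := Real.rpow_nonneg hnpos.le _
          have hnnL : (0:ℝ) ≤ L^(-(α-1/2)) := Real.rpow_nonneg hLpos.le _
          apply mul_le_mul_of_nonneg_right (mul_le_mul_of_nonneg_right hL1 hnnL) hnn12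
      _ = ε^(-(α+1/2)) * L^(-(α-1/2)) * ((n:ℝ)^((1:ℝ)/12) * (n:ℝ)^(-(1:ℝ)/12)) := by ring
      _ = ε^(-(α+1/2)) * L^(-(α-1/2)) := by rw [hcancel, mul_one]
  -- combine
  have hCS : (0:ℝ) ≤ C * S := mul_nonneg hC.le hS
  have hmain : C * S * (n:ℝ)^(-(1:ℝ)/4)
        * Real.sqrt (∑ q ∈ Finset.range (Q+1), J q ^ 2 * q * 3^q)
      ≤ c₁ * L^(-(α-1/2)) := by
    have hrnn : (0:ℝ) ≤ (n:ℝ)^(-(1:ℝ)/4) := Real.rpow_nonneg hnpos.le _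
    calc C * S * (n:ℝ)^(-(1:ℝ)/4)
          * Real.sqrt (∑ q ∈ Finset.range (Q+1), J q ^ 2 * q * 3^q)
        ≤ C * S * (n:ℝ)^(-(1:ℝ)/4) * M := by
          apply mul_le_mul_of_nonneg_left hsqrtSm (mul_nonneg hCS hrnn)
      _ = C * S * A * ((Q:ℝ)+1) * ((n:ℝ)^(-(1:ℝ)/4) * Real.sqrt ((3:ℝ)^Q)) := by
          rw [hM]; ring
      _ ≤ C * S * A * ((Q:ℝ)+1) * ((n:ℝ)^(-(1:ℝ)/4) * (n:ℝ)^((1:ℝ)/6)) := by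
          apply mul_le_mul_of_nonneg_left (mul_le_mul_of_nonneg_left hsqrt3Q hrnn)
          exact mul_nonneg (mul_nonneg hCS hA.le) (by positivity)
      _ = C * S * A * ((Q:ℝ)+1) * (n:ℝ)^(-(1:ℝ)/12) := by rw [hn112]
      _ ≤ C * S * A * (c₂ * L) * (n:ℝ)^(-(1:ℝ)/12) := by
          apply mul_le_mul_of_nonneg_right (mul_le_mul_of_nonneg_left hQ1L
            (mul_nonneg hCS hA.le)) (Real.rpow_nonneg hnpos.le _)
      _ = C * S * A * c₂ * (L * (n:ℝ)^(-(1:ℝ)/12)) := by ring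
      _ ≤ C * S * A * c₂ * (ε^(-(α+1/2)) * L^(-(α-1/2))) := by
          apply mul_le_mul_of_nonneg_left hLn
          exact mul_nonneg (mul_nonneg hCS hA.le) hc₂pos.le
      _ = c₁ * L^(-(α-1/2)) := by rw [hc₁]; ring
  have htailfinal : (3/2) * Real.sqrt (∑' k : ℕ, J (Q + 1 + k) ^ 2)
      ≤ c₃ * L^(-(α-1/2)) := by
    calc (3/2) * Real.sqrt (∑' k : ℕ, J (Q + 1 + k) ^ 2)
        ≤ (3/2) * t := by linarith
      _ = c₃ * L^(-(α-1/2)) := by rw [hc₃, ht]; ring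
  calc D ≤ C * S * (n:ℝ)^(-(1:ℝ)/4)
        * Real.sqrt (∑ q ∈ Finset.range (Q+1), J q ^ 2 * q * 3^q)
      + (3/2) * Real.sqrt (∑' k : ℕ, J (Q + 1 + k) ^ 2) := hD
    _ ≤ c₁ * L^(-(α-1/2)) + c₃ * L^(-(α-1/2)) := add_le_add hmain htailfinal
    _ = (c₁ + c₃) * L^(-(α-1/2)) := by ring
end

section
/- For a sequence of nonnegative reals (J_q) with J_q ≤ A e^{-C√q} for constants A, C > 0, and Q_n chosen as Q_n = ⌊c₀ log n⌋ for suitable c₀ > 0 with Q_n ≤ log₃√n, the bound n^{-1/4}√(Σ_{q=0}^{Q_n} J_q² q 3^q) + √(Σ_{q>Q_n} J_q²) is at most C' exp(−c√(log n)) for constants C', c > 0. -/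
open Real Finset

/-! With `L = log n` and `Q = ⌊L / 16⌋`, the head sum is at most `A² (Q + 1)² 3^Q ≤ A² e^{4Q}`,
so after the factor `n^{-1/4} = e^{-L/4}` the first term is `≤ A e^{-L/8}`. On the tail,
`√m + √k ≤ 2 √(m + k)` splits `J_{m+k}² ≤ A² e^{-C√m} e^{-C√k}`, and `∑ e^{-C√k}` converges
because `e^{-C√k} ≤ 24 / (C⁴ k²)`; hence the second term is `O(e^{-C√(Q+1)/2}) = O(e^{-C√L/8})`.
Both are `O(e^{-c√L})` for `c = min (C/8) (1/16)`. -/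

lemma exp_neg_mul_sqrt_le {C x : ℝ} (hC : 0 < C) (hx : 0 < x) :
    exp (-C * √x) ≤ 24 / C ^ 4 * (1 / x ^ 2) := by
  have hexp : (C * √x) ^ 4 / 24 ≤ exp (C * √x) := by
    simpa [Nat.factorial] using pow_div_factorial_le_exp (x := C * √x) (by positivity) 4
  have hpow : (C * √x) ^ 4 = C ^ 4 * x ^ 2 := by
    rw [mul_pow, show 4 = 2 * 2 from rfl, pow_mul (√x), sq_sqrt hx.le]
  calc exp (-C * √x) = (exp (C * √x))⁻¹ := by rw [neg_mul, exp_neg]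
    _ ≤ ((C * √x) ^ 4 / 24)⁻¹ := inv_anti₀ (by positivity) hexp
    _ = 24 / C ^ 4 * (1 / x ^ 2) := by rw [hpow]; field_simp

lemma summable_exp_neg_mul_sqrt_nat {C : ℝ} (hC : 0 < C) :
    Summable fun k : ℕ => exp (-C * √k) := by
  rw [← summable_nat_add_iff 1]
  have hsq : Summable fun k : ℕ => 1 / ((k + 1 : ℕ) : ℝ) ^ 2 :=
    (summable_nat_add_iff 1).2 (summable_one_div_nat_pow.2 one_lt_two)
  exact (hsq.mul_left _).of_nonneg_of_le (fun _ => (exp_pos _).le)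
    fun k => exp_neg_mul_sqrt_le hC (by positivity)

lemma three_pow_le_exp_two_mul (q : ℕ) : (3 : ℝ) ^ q ≤ exp (2 * q) := by
  rw [mul_comm, exp_nat_mul]
  gcongr
  linarith [add_one_le_exp 2]

lemma sqrt_sum_sq_mul_three_pow_le {J : ℕ → ℝ} {B : ℝ} (hJ0 : ∀ q, 0 ≤ J q)
    (hJB : ∀ q, J q ≤ B) (Q : ℕ) :
    √(∑ q ∈ range (Q + 1), J q ^ 2 * q * 3 ^ q) ≤ B * exp (2 * Q) := by
  have hB : 0 ≤ B := (hJ0 0).trans (hJB 0)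
  have hterm : ∀ q ∈ range (Q + 1), J q ^ 2 * q * 3 ^ q ≤ B ^ 2 * (Q + 1) * exp (2 * Q) := by
    intro q hq
    have hqQ : q ≤ Q := Nat.lt_succ_iff.mp (mem_range.mp hq)
    gcongr
    · exact hJ0 q
    · exact hJB q
    · exact_mod_cast hqQ.trans Q.le_succ
    · exact (pow_le_pow_right₀ (by norm_num) hqQ).trans (three_pow_le_exp_two_mul Q)
  rw [sqrt_le_left (by positivity)]
  calc ∑ q ∈ range (Q + 1), J q ^ 2 * q * 3 ^ q
      ≤ ∑ q ∈ range (Q + 1), B ^ 2 * (Q + 1) * exp (2 * Q) := sum_le_sum hterm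
    _ = B ^ 2 * (Q + 1) ^ 2 * exp (2 * Q) := by
        simp only [sum_const, card_range, nsmul_eq_mul]; push_cast; ring
    _ ≤ B ^ 2 * exp Q ^ 2 * exp (2 * Q) := by gcongr; exact add_one_le_exp _
    _ = (B * exp (2 * Q)) ^ 2 := by
        rw [mul_pow, ← exp_nat_mul, ← exp_nat_mul, mul_assoc, ← exp_add]; push_cast; ring_nf

lemma sqrt_tsum_sq_shift_le {J : ℕ → ℝ} {A C : ℝ} (hC : 0 < C) (hJ0 : ∀ q, 0 ≤ J q)
    (hJ : ∀ q : ℕ, J q ≤ A * exp (-C * √q)) (m : ℕ) :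
    √(∑' k, J (m + k) ^ 2) ≤ A * √(∑' k : ℕ, exp (-C * √k)) * exp (-C * √m / 2) := by
  have hA : 0 ≤ A := by simpa using (hJ0 0).trans (hJ 0)
  have hpoint : ∀ k : ℕ, J (m + k) ^ 2 ≤ A ^ 2 * exp (-C * √m) * exp (-C * √k) := by
    intro k
    have hsqrt : √m + √k ≤ 2 * √(m + k : ℕ) := by
      have hm : √m ≤ √(m + k : ℕ) := sqrt_le_sqrt (by exact_mod_cast m.le_add_right k)
      have hk : √k ≤ √(m + k : ℕ) := sqrt_le_sqrt (by exact_mod_cast k.le_add_left m)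
      linarith
    calc J (m + k) ^ 2 ≤ (A * exp (-C * √(m + k : ℕ))) ^ 2 := pow_le_pow_left₀ (hJ0 _) (hJ _) 2
      _ = A ^ 2 * exp (-C * (2 * √(m + k : ℕ))) := by rw [mul_pow, ← exp_nat_mul]; ring_nf
      _ ≤ A ^ 2 * exp (-C * (√m + √k)) := by
        gcongr A ^ 2 * exp ?_
        nlinarith [mul_le_mul_of_nonneg_left hsqrt hC.le]
      _ = A ^ 2 * exp (-C * √m) * exp (-C * √k) := by rw [mul_assoc, ← exp_add]; ring_nf
  have hsum := summable_exp_neg_mul_sqrt_nat hC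
  have htsum : ∑' k, J (m + k) ^ 2 ≤ A ^ 2 * exp (-C * √m) * ∑' k : ℕ, exp (-C * √k) := by
    rw [← tsum_mul_left]
    exact (hsum.mul_left _).of_nonneg_of_le (fun _ => sq_nonneg _) hpoint
      |>.tsum_le_tsum hpoint (hsum.mul_left _)
  calc √(∑' k, J (m + k) ^ 2) ≤ √(A ^ 2 * exp (-C * √m) * ∑' k : ℕ, exp (-C * √k)) :=
        sqrt_le_sqrt htsum
    _ = A * √(∑' k : ℕ, exp (-C * √k)) * exp (-C * √m / 2) := by
        rw [sqrt_mul (by positivity), sqrt_mul (sq_nonneg A), sqrt_sq hA, ← exp_half]; ring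

lemma rpow_neg_quarter_mul_sqrt_sum_le {n Q : ℕ} (hn : 0 < n) (hQ : (Q : ℝ) ≤ log n / 16)
    {J : ℕ → ℝ} {B : ℝ} (hJ0 : ∀ q, 0 ≤ J q) (hJB : ∀ q, J q ≤ B) :
    (n : ℝ) ^ (-(1 : ℝ) / 4) * √(∑ q ∈ range (Q + 1), J q ^ 2 * q * 3 ^ q) ≤
      B * exp (-(log n / 8)) := by
  have hB : 0 ≤ B := (hJ0 0).trans (hJB 0)
  rw [rpow_def_of_pos (by exact_mod_cast hn)]
  calc exp (log n * (-1 / 4)) * √(∑ q ∈ range (Q + 1), J q ^ 2 * q * 3 ^ q)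
      ≤ exp (log n * (-1 / 4)) * (B * exp (2 * Q)) := by
        gcongr; exact sqrt_sum_sq_mul_three_pow_le hJ0 hJB Q
    _ = B * exp (2 * Q - log n / 4) := by rw [sub_eq_add_neg, exp_add]; ring_nf
    _ ≤ B * exp (-(log n / 8)) := by gcongr; linarith

lemma one_quarter_le_log_nat {n : ℕ} (hn : 2 ≤ n) : 1 / 4 ≤ log n :=
  (show (1 / 4 : ℝ) ≤ log 2 by linarith [log_two_gt_d9]).trans
    (log_le_log (by norm_num) (by exact_mod_cast hn))

lemma mul_sqrt_le_div_eight {c L : ℝ} (hc : c ≤ 1 / 16) (hL : 1 / 4 ≤ L) : c * √L ≤ L / 8 := by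
  have hsqrt : 1 / 2 ≤ √L := (le_sqrt' (by norm_num)).2 (by linarith)
  nlinarith [sq_sqrt (show 0 ≤ L by linarith)]

lemma mul_sqrt_le_mul_sqrt_div_two {c C L x : ℝ} (hC : 0 ≤ C) (hc : c ≤ C / 8)
    (hx : L / 16 ≤ x) : c * √L ≤ C * √x / 2 := by
  have hsqrt : √L / 4 ≤ √x := by
    rcases le_total 0 L with hL | hL
    · exact (le_sqrt (by positivity) (by linarith)).2 (by rw [div_pow, sq_sqrt hL]; linarith)
    · rw [sqrt_eq_zero'.2 hL]; simp [sqrt_nonneg]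
  nlinarith [sqrt_nonneg L]

/-- For nonnegative `(J_q)` with `J_q ≤ A e^{-C√q}`, choosing `Q_n = ⌊c₀ log n⌋` for a
suitable `c₀ > 0` with `Q_n ≤ log₃ √n`, the bound
`n^{-1/4} √(∑_{q≤Q_n} J_q² q 3^q) + √(∑_{q>Q_n} J_q²)` is at most
`C' exp(-c √(log n))` for constants `C', c > 0`. -/
theorem subexponential_decay_rate (A C : ℝ) (hA : 0 < A) (hC : 0 < C) :
    ∃ c₀ : ℝ, 0 < c₀ ∧ ∃ C' c : ℝ, 0 < C' ∧ 0 < c ∧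
      ∀ n : ℕ, 2 ≤ n →
        ((⌊c₀ * Real.log n⌋₊ : ℝ) ≤ Real.log n / (2 * Real.log 3)) ∧
        ∀ J : ℕ → ℝ, (∀ q : ℕ, 0 ≤ J q) →
          (∀ q : ℕ, J q ≤ A * Real.exp (-C * Real.sqrt q)) →
          (n : ℝ) ^ (-(1 : ℝ) / 4) *
              Real.sqrt (∑ q ∈ Finset.range (⌊c₀ * Real.log n⌋₊ + 1),
                J q ^ 2 * q * 3 ^ q) +
            Real.sqrt (∑' k : ℕ, J (⌊c₀ * Real.log n⌋₊ + 1 + k) ^ 2) ≤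
          C' * Real.exp (-c * Real.sqrt (Real.log n)) := by
  set S := ∑' k : ℕ, exp (-C * √k)
  set c := min (C / 8) (1 / 16)
  refine ⟨1 / 16, by norm_num, A * (1 + √S), c, by positivity, by positivity, fun n hn => ?_⟩
  set L := log n
  set Q := ⌊1 / 16 * L⌋₊
  have hL : 1 / 4 ≤ L := one_quarter_le_log_nat hn
  have hQ : (Q : ℝ) ≤ L / 16 := by have := Nat.floor_le (a := 1 / 16 * L) (by positivity); linarith
  have hQ' : L / 16 ≤ (Q + 1 : ℕ) := by
    have := Nat.lt_floor_add_one (1 / 16 * L); push_cast; linarith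
  refine ⟨hQ.trans (div_le_div_of_nonneg_left (by linarith) (by positivity) ?_), fun J hJ0 hJ => ?_⟩
  · linarith [log_le_sub_one_of_pos (x := 3) (by norm_num)]
  have hJA : ∀ q, J q ≤ A := fun q => (hJ q).trans <| mul_le_of_le_one_right hA.le <|
    exp_le_one_iff.2 (by nlinarith [sqrt_nonneg (q : ℝ)])
  have hexp_head : -(L / 8) ≤ -c * √L := by
    linarith [mul_sqrt_le_div_eight (min_le_right (C / 8) (1 / 16)) hL]
  have hexp_tail : -C * √(Q + 1 : ℕ) / 2 ≤ -c * √L := by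
    linarith [mul_sqrt_le_mul_sqrt_div_two hC.le (min_le_left (C / 8) (1 / 16)) hQ']
  calc _ ≤ A * exp (-(L / 8)) + A * √S * exp (-C * √(Q + 1 : ℕ) / 2) :=
        add_le_add (rpow_neg_quarter_mul_sqrt_sum_le (by omega) hQ hJ0 hJA)
          (sqrt_tsum_sq_shift_le hC hJ0 hJ (Q + 1))
    _ ≤ A * exp (-c * √L) + A * √S * exp (-c * √L) := by gcongr
    _ = A * (1 + √S) * exp (-c * √L) := by ring
end
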